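/- arXiv:2312.14672 — 16 statements merged into one kernel-verified Lean document; each statement's English description precedes it below -/
import Mathlib

section
/- Let D ⊆ (0,∞) be an interval and p : D → ℝ a continuous function with |x·p(x)| < 1 for all x ∈ D. Then: (a) there exists a differentiable function z : D → ℝ with z'(x) = x·p(x)/√(1−(x·p(x))²) for all x ∈ D; (b) every such z satisfies (1/x)·z'(x)/√(1+z'(x)²) = p(x) for all x ∈ D, i.e., the rotational surface generated by the graph of z has principal curvature along parallels equal to p(x); and (c) any two such functions z differ by an additive constant. Hence there is exactly one rotational surface (up to translations along the z-axis) whose principal curvature on parallels is p(x), and it has geometric linear momentum 𝒦(x) = x·p(x). -/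
/-!
The maps `u ↦ u / √(1 - u²)` and `v ↦ v / √(1 + v²)` are mutually inverse between `(-1, 1)`
and `ℝ`, so a graph whose slope is `x p / √(1 - (x p)²)` has momentum `x p`, hence `k_p = p`.
Such a `z` is a primitive of a function continuous on the interval `D`. To get a two-sided
derivative at an endpoint that belongs to `D`, integrate an extension that is constant beyond
that endpoint. Two primitives on an interval differ by a constant by the mean value inequality.
-/

open Set MeasureTheory

section OneSidedContinuity

variable {α β : Type*} [LinearOrder α] [TopologicalSpace α] [OrderTopology α]
  [TopologicalSpace β] {D : Set α} {g : α → β} {x : α}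

lemma Set.OrdConnected.continuousWithinAt_Iic (hD : D.OrdConnected) (hg : ContinuousOn g D)
    (hx : x ∈ D) (hleast : IsLeast D x → ∀ t < x, g t = g x) :
    ContinuousWithinAt g (Iic x) x := by
  by_cases h : ∃ y ∈ D, y < x
  · obtain ⟨y, hy, hyx⟩ := h
    exact ((hg x hx).mono (hD.out hy hx)).mono_of_mem_nhdsWithin (Icc_mem_nhdsLE hyx)
  · push Not at h
    refine continuousWithinAt_const.congr (fun t ht => ?_) rfl
    rcases (mem_Iic.mp ht).lt_or_eq with hlt | rfl
    exacts [hleast ⟨hx, h⟩ t hlt, rfl]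

lemma Set.OrdConnected.continuousWithinAt_Ici (hD : D.OrdConnected) (hg : ContinuousOn g D)
    (hx : x ∈ D) (hgreatest : IsGreatest D x → ∀ t > x, g t = g x) :
    ContinuousWithinAt g (Ici x) x :=
  hD.dual.continuousWithinAt_Iic (α := αᵒᵈ) (g := g ∘ OrderDual.ofDual) hg hx hgreatest

lemma Set.OrdConnected.continuousAt (hD : D.OrdConnected) (hg : ContinuousOn g D)
    (hx : x ∈ D) (hleast : IsLeast D x → ∀ t < x, g t = g x)
    (hgreatest : IsGreatest D x → ∀ t > x, g t = g x) : ContinuousAt g x :=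
  continuousAt_iff_continuous_left_right.2
    ⟨hD.continuousWithinAt_Iic hg hx hleast, hD.continuousWithinAt_Ici hg hx hgreatest⟩

end OneSidedContinuity

section Primitive

variable {E : Type*} [NormedAddCommGroup E] {D : Set ℝ} {f : ℝ → E}

lemma Set.OrdConnected.exists_eqOn_continuousAt (hD : D.OrdConnected) (hf : ContinuousOn f D)
    {x₀ : ℝ} (hx₀ : x₀ ∈ D) :
    ∃ g : ℝ → E, EqOn g f D ∧ (∀ x ∈ D, ContinuousAt g x) ∧ AEStronglyMeasurable g := by
  classical
  set g := D.piecewise f ((Iic x₀).piecewise (fun _ => f (sInf D)) (fun _ => f (sSup D)))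
  have hgf : EqOn g f D := fun t ht => D.piecewise_eq_of_mem _ _ ht
  refine ⟨g, hgf, fun x hx => ?_, ?_⟩
  · refine hD.continuousAt (hf.congr hgf) hx (fun hleast t htx => ?_) (fun hgreatest t hxt => ?_)
    · have htD : t ∉ D := fun htD => (hleast.2 htD).not_gt htx
      rw [hgf hx]
      simp [g, htD, htx.le.trans (hleast.2 hx₀), hleast.csInf_eq]
    · have htD : t ∉ D := fun htD => (hgreatest.2 htD).not_gt hxt
      rw [hgf hx]
      simp [g, htD, ((hgreatest.2 hx₀).trans_lt hxt).not_ge, hgreatest.csSup_eq]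
  · exact .piecewise hD.measurableSet (hf.aestronglyMeasurable hD.measurableSet)
      (stronglyMeasurable_const.piecewise measurableSet_Iic stronglyMeasurable_const).aestronglyMeasurable

variable [NormedSpace ℝ E] [CompleteSpace E]

lemma Set.OrdConnected.exists_hasDerivAt (hD : D.OrdConnected) (hf : ContinuousOn f D) :
    ∃ z : ℝ → E, ∀ x ∈ D, HasDerivAt z (f x) x := by
  rcases D.eq_empty_or_nonempty with rfl | ⟨x₀, hx₀⟩
  · exact ⟨0, fun x hx => hx.elim⟩
  obtain ⟨g, hgf, hgc, hgm⟩ := hD.exists_eqOn_continuousAt hf hx₀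
  refine ⟨fun x => ∫ t in x₀..x, g t, fun x hx => ?_⟩
  have hsub : uIcc x₀ x ⊆ D := hD.uIcc_subset hx₀ hx
  have hint : IntervalIntegrable g volume x₀ x :=
    ((hf.mono hsub).congr (hgf.mono hsub)).intervalIntegrable
  simpa [hgf hx] using
    intervalIntegral.integral_hasDerivAt_right hint hgm.stronglyMeasurableAtFilter (hgc x hx)

end Primitive

lemma Set.OrdConnected.exists_sub_eq_const_of_hasDerivAt {E : Type*} [NormedAddCommGroup E]
    [NormedSpace ℝ E] {D : Set ℝ} (hD : D.OrdConnected) {f : ℝ → E} {z₁ z₂ : ℝ → E}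
    (h₁ : ∀ x ∈ D, HasDerivAt z₁ (f x) x) (h₂ : ∀ x ∈ D, HasDerivAt z₂ (f x) x) :
    ∃ C, ∀ x ∈ D, z₁ x - z₂ x = C := by
  rcases D.eq_empty_or_nonempty with rfl | ⟨x₀, hx₀⟩
  · exact ⟨0, fun x hx => hx.elim⟩
  refine ⟨z₁ x₀ - z₂ x₀, fun x hx => ?_⟩
  have hderiv : ∀ y ∈ D, HasDerivWithinAt (z₁ - z₂) 0 D y := fun y hy => by
    simpa using ((h₁ y hy).sub (h₂ y hy)).hasDerivWithinAt
  simpa [sub_eq_zero] using hD.convex.norm_image_sub_le_of_norm_hasDerivWithin_le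
    hderiv (fun _ _ => le_of_eq norm_zero) hx₀ hx

lemma div_sqrt_one_add_sq_div_sqrt_one_sub_sq {u : ℝ} (hu : |u| < 1) :
    u / √(1 - u ^ 2) / √(1 + (u / √(1 - u ^ 2)) ^ 2) = u := by
  have hpos : 0 < 1 - u ^ 2 := by nlinarith [abs_lt.mp hu]
  have hs : 1 + (u / √(1 - u ^ 2)) ^ 2 = (√(1 - u ^ 2))⁻¹ ^ 2 := by
    rw [div_pow, Real.sq_sqrt hpos.le, inv_pow, Real.sq_sqrt hpos.le]
    field_simp
    ring
  rw [hs, Real.sqrt_sq (by positivity)]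
  field_simp

/-- Prescribing the principal curvature on parallels p(x) with |x·p(x)| < 1:
(a) existence of a generatrix graph, (b) it has k_p = p, (c) uniqueness up to
z-translations; the geometric linear momentum is 𝒦(x) = x·p(x). -/
theorem stmt_1 (D : Set ℝ) (hD : D.OrdConnected) (hD0 : D ⊆ Set.Ioi 0)
    (p : ℝ → ℝ) (hp : ContinuousOn p D)
    (hbound : ∀ x ∈ D, |x * p x| < 1) :
    (∃ z : ℝ → ℝ, ∀ x ∈ D,
        HasDerivAt z (x * p x / Real.sqrt (1 - (x * p x) ^ 2)) x) ∧
    (∀ z : ℝ → ℝ,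
        (∀ x ∈ D, HasDerivAt z (x * p x / Real.sqrt (1 - (x * p x) ^ 2)) x) →
        ∀ x ∈ D, (1 / x) * (deriv z x / Real.sqrt (1 + (deriv z x) ^ 2)) = p x) ∧
    (∀ z₁ z₂ : ℝ → ℝ,
        (∀ x ∈ D, HasDerivAt z₁ (x * p x / Real.sqrt (1 - (x * p x) ^ 2)) x) →
        (∀ x ∈ D, HasDerivAt z₂ (x * p x / Real.sqrt (1 - (x * p x) ^ 2)) x) →
        ∃ C : ℝ, ∀ x ∈ D, z₁ x - z₂ x = C) := by
  have hmomentum : ContinuousOn (fun x => x * p x) D := continuousOn_id.mul hp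
  have hslope : ContinuousOn (fun x => x * p x / √(1 - (x * p x) ^ 2)) D :=
    hmomentum.div (continuousOn_const.sub (hmomentum.pow 2)).sqrt fun x hx =>
      Real.sqrt_ne_zero'.2 (by nlinarith [abs_lt.mp (hbound x hx)])
  refine ⟨hD.exists_hasDerivAt hslope, fun z hz x hx => ?_,
    fun z₁ z₂ h₁ h₂ => hD.exists_sub_eq_const_of_hasDerivAt h₁ h₂⟩
  rw [(hz x hx).deriv, div_sqrt_one_add_sq_div_sqrt_one_sub_sq (hbound x hx), one_div,
    inv_mul_cancel_left₀ (hD0 hx).ne']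
end

section
/- Let I ⊆ (0,∞) be an interval, H : I → ℝ a continuous function, and G : I → ℝ a differentiable function with G'(x) = x·H(x) for all x ∈ I. Then: (a) if 𝒦 : I → ℝ is differentiable and satisfies 𝒦'(x) + 𝒦(x)/x = 2·H(x) for all x ∈ I, there exists a constant c ∈ ℝ with x·𝒦(x) = 2·G(x) + c for all x ∈ I; (b) conversely, for every c ∈ ℝ the function 𝒦(x) := (2·G(x) + c)/x is differentiable on I and satisfies 𝒦'(x) + 𝒦(x)/x = 2·H(x) for all x ∈ I. Hence the rotational surfaces with mean curvature H(x) form a one-parameter family, determined by x·𝒦(x) = 2∫x·H(x)dx. -/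
/-!
The left-hand side of the equation is the derivative of `x𝒦` divided by `x`:
`x (𝒦' + 𝒦/x) = (x𝒦)'`. Hence the equation says `(x𝒦)' = 2xH = (2G)'`, so `x𝒦 - 2G` has zero
derivative and is constant on the interval; conversely `𝒦 = (2G + c)/x` solves it.
-/

open Set

theorem Convex.eq_of_forall_hasDerivWithinAt_zero {E : Type*} [NormedAddCommGroup E]
    [NormedSpace ℝ E] {s : Set ℝ} {f : ℝ → E} (hs : Convex ℝ s)
    (hf : ∀ x ∈ s, HasDerivWithinAt f 0 s x) {x y : ℝ} (hx : x ∈ s) (hy : y ∈ s) :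
    f x = f y := by
  have := hs.norm_image_sub_le_of_norm_hasDerivWithin_le hf (fun _ _ => norm_zero.le) hx hy
  rwa [zero_mul, norm_le_zero_iff, sub_eq_zero, eq_comm] at this

theorem HasDerivAt.id_mul {K : ℝ → ℝ} {K' x : ℝ} (hK : HasDerivAt K K' x) (hx : x ≠ 0) :
    HasDerivAt (fun y => y * K y) (x * (K' + K x / x)) x :=
  ((hasDerivAt_id' x).mul hK).congr_deriv (by field_simp; ring)

theorem HasDerivAt.div_id {A : ℝ → ℝ} {a x : ℝ} (hA : HasDerivAt A (x * a) x) (hx : x ≠ 0) :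
    HasDerivAt (fun y => A y / y) (a - A x / x / x) x :=
  (hA.div (hasDerivAt_id' x) hx).congr_deriv (by field_simp)

theorem Convex.exists_mul_eq_of_deriv_add_div_eq {I : Set ℝ} (hI : Convex ℝ I)
    (hI0 : I ⊆ Ioi 0) {H G K : ℝ → ℝ} (hG : ∀ x ∈ I, HasDerivAt G (x * H x) x)
    (hK : ∀ x ∈ I, DifferentiableAt ℝ K x) (hKH : ∀ x ∈ I, deriv K x + K x / x = 2 * H x) :
    ∃ c : ℝ, ∀ x ∈ I, x * K x = 2 * G x + c := by
  rcases I.eq_empty_or_nonempty with rfl | ⟨x₀, hx₀⟩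
  · exact ⟨0, fun x hx => hx.elim⟩
  have hconst : ∀ y ∈ I, HasDerivWithinAt (fun y => y * K y - 2 * G y) 0 I y := by
    intro y hy
    have h := ((hK y hy).hasDerivAt.id_mul (hI0 hy).ne').sub ((hG y hy).const_mul 2)
    rw [hKH y hy] at h
    exact (h.congr_deriv (by ring)).hasDerivWithinAt
  refine ⟨x₀ * K x₀ - 2 * G x₀, fun x hx => ?_⟩
  linarith [hI.eq_of_forall_hasDerivWithinAt_zero hconst hx hx₀]

theorem stmt_4_general (I : Set ℝ) (hI : I.OrdConnected) (hI0 : I ⊆ Set.Ioi 0)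
    (H G : ℝ → ℝ)
    (hG : ∀ x ∈ I, HasDerivAt G (x * H x) x) :
    (∀ K : ℝ → ℝ, (∀ x ∈ I, DifferentiableAt ℝ K x) →
        (∀ x ∈ I, deriv K x + K x / x = 2 * H x) →
        ∃ c : ℝ, ∀ x ∈ I, x * K x = 2 * G x + c) ∧
    (∀ c : ℝ, (∀ x ∈ I, DifferentiableAt ℝ (fun y => (2 * G y + c) / y) x) ∧
        (∀ x ∈ I, deriv (fun y => (2 * G y + c) / y) x
            + ((2 * G x + c) / x) / x = 2 * H x)) := by
  refine ⟨fun K hK hKH => hI.convex.exists_mul_eq_of_deriv_add_div_eq hI0 hG hK hKH,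
    fun c => ?_⟩
  have hsol : ∀ x ∈ I, HasDerivAt (fun y => (2 * G y + c) / y)
      (2 * H x - (2 * G x + c) / x / x) x := fun x hx =>
    ((((hG x hx).const_mul 2).add_const c).congr_deriv (by ring)).div_id (hI0 hx).ne'
  exact ⟨fun x hx => (hsol x hx).differentiableAt,
    fun x hx => by rw [(hsol x hx).deriv]; ring⟩

/-- Prescribing mean curvature H(x): the momenta 𝒦 satisfying
𝒦'(x) + 𝒦(x)/x = 2H(x) are exactly the functions with x·𝒦(x) = 2·G(x) + c,
G being an antiderivative of x·H(x). -/
theorem stmt_4 (I : Set ℝ) (hI : I.OrdConnected) (hI0 : I ⊆ Set.Ioi 0)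
    (H G : ℝ → ℝ) (hH : ContinuousOn H I)
    (hG : ∀ x ∈ I, HasDerivAt G (x * H x) x) :
    (∀ K : ℝ → ℝ, (∀ x ∈ I, DifferentiableAt ℝ K x) →
        (∀ x ∈ I, deriv K x + K x / x = 2 * H x) →
        ∃ c : ℝ, ∀ x ∈ I, x * K x = 2 * G x + c) ∧
    (∀ c : ℝ, (∀ x ∈ I, DifferentiableAt ℝ (fun y => (2 * G y + c) / y) x) ∧
        (∀ x ∈ I, deriv (fun y => (2 * G y + c) / y) x
            + ((2 * G x + c) / x) / x = 2 * H x)) :=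
  stmt_4_general I hI hI0 H G hG
end

section
/- Let I ⊆ (0,∞) be an interval, K_G : I → ℝ a continuous function, and G : I → ℝ a differentiable function with G'(x) = x·K_G(x) for all x ∈ I. Then: (a) if 𝒦 : I → ℝ is differentiable and satisfies 𝒦(x)·𝒦'(x)/x = K_G(x) for all x ∈ I, there exists a constant c ∈ ℝ with 𝒦(x)² = 2·G(x) + c for all x ∈ I; (b) conversely, if c ∈ ℝ is such that 2·G(x) + c > 0 for all x ∈ I, then 𝒦(x) := √(2·G(x) + c) is differentiable on I and satisfies 𝒦(x)·𝒦'(x)/x = K_G(x) for all x ∈ I. Hence the rotational surfaces with Gauss curvature K_G(x) form a one-parameter family, determined by 𝒦(x)² = 2∫x·K_G(x)dx. -/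
/-- Prescribing Gauss curvature K_G(x): the momenta 𝒦 satisfying
𝒦(x)·𝒦'(x)/x = K_G(x) are exactly the functions with 𝒦(x)² = 2·G(x) + c,
G being an antiderivative of x·K_G(x). -/
theorem stmt_5 (I : Set ℝ) (hI : I.OrdConnected) (hI0 : I ⊆ Set.Ioi 0)
    (KG G : ℝ → ℝ) (hKG : ContinuousOn KG I)
    (hG : ∀ x ∈ I, HasDerivAt G (x * KG x) x) :
    (∀ K : ℝ → ℝ, (∀ x ∈ I, DifferentiableAt ℝ K x) →
        (∀ x ∈ I, K x * deriv K x / x = KG x) →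
        ∃ c : ℝ, ∀ x ∈ I, (K x) ^ 2 = 2 * G x + c) ∧
    (∀ c : ℝ, (∀ x ∈ I, 0 < 2 * G x + c) →
        (∀ x ∈ I, DifferentiableAt ℝ (fun y => Real.sqrt (2 * G y + c)) x) ∧
        (∀ x ∈ I, Real.sqrt (2 * G x + c)
            * deriv (fun y => Real.sqrt (2 * G y + c)) x / x = KG x)) := by
  constructor
  · intro K hKdiff hKeq
    rcases I.eq_empty_or_nonempty with rfl | ⟨x0, hx0⟩
    · exact ⟨0, fun x hx => absurd hx (Set.notMem_empty x)⟩
    · refine ⟨K x0 ^ 2 - 2 * G x0, fun x hx => ?_⟩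
      -- H := K^2 - 2G has derivative 0 on I
      have hH : ∀ y ∈ I, HasDerivAt (fun z => K z ^ 2 - 2 * G z) 0 y := by
        intro y hy
        have hy0 : (0:ℝ) < y := hI0 hy
        have h1 : K y * deriv K y = y * KG y := by
          have := hKeq y hy
          field_simp at this
          linarith [this]
        have hd : HasDerivAt (fun z => K z ^ 2 - 2 * G z)
            (2 * K y ^ 1 * deriv K y - 2 * (y * KG y)) y :=
          (((hKdiff y hy).hasDerivAt.pow 2)).sub ((hG y hy).const_mul 2)
        have : (2 : ℝ) * K y ^ 1 * deriv K y - 2 * (y * KG y) = 0 := by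
          rw [pow_one]; ring_nf; nlinarith [h1]
        rwa [this] at hd
      -- constancy on the interval between x0 and x
      have key : ∀ a b : ℝ, a ∈ I → b ∈ I → a ≤ b →
          K b ^ 2 - 2 * G b = K a ^ 2 - 2 * G a := by
        intro a b ha hb hab
        have hsub : Set.Icc a b ⊆ I := fun z hz => hI.out ha hb hz
        have := constant_of_has_deriv_right_zero
          (f := fun z => K z ^ 2 - 2 * G z) (a := a) (b := b)
          (fun z hz => ((hH z (hsub hz)).continuousAt).continuousWithinAt)
          (fun z hz => ((hH z (hsub (Set.mem_Icc_of_Ico hz))).hasDerivWithinAt))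
        exact this b (Set.right_mem_Icc.2 hab)
      rcases le_total x0 x with h | h
      · have := key x0 x hx0 hx h; linarith
      · have := key x x0 hx hx0 h; linarith
  · intro c hc
    have hK : ∀ x ∈ I, HasDerivAt (fun y => Real.sqrt (2 * G y + c))
        (x * KG x / Real.sqrt (2 * G x + c)) x := by
      intro x hx
      have hpos := hc x hx
      have hinner : HasDerivAt (fun y => 2 * G y + c) (2 * (x * KG x)) x :=
        ((hG x hx).const_mul 2).add_const c
      have hsqrt : HasDerivAt Real.sqrt (1 / (2 * Real.sqrt (2 * G x + c)))
          (2 * G x + c) := Real.hasDerivAt_sqrt (ne_of_gt hpos)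
      have := hsqrt.comp x hinner
      have heq : 1 / (2 * Real.sqrt (2 * G x + c)) * (2 * (x * KG x))
          = x * KG x / Real.sqrt (2 * G x + c) := by
        have hs : Real.sqrt (2 * G x + c) ≠ 0 :=
          ne_of_gt (Real.sqrt_pos.2 hpos)
        field_simp
      rwa [heq] at this
    refine ⟨fun x hx => (hK x hx).differentiableAt, fun x hx => ?_⟩
    have hpos := hc x hx
    have hx0 : (0:ℝ) < x := hI0 hx
    have hs : Real.sqrt (2 * G x + c) ≠ 0 := ne_of_gt (Real.sqrt_pos.2 hpos)
    rw [(hK x hx).deriv]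
    field_simp
end

section
/- Let a > 0 and β ∈ (−π/2, π/2), and write c_β = cos β, s_β = sin β. Define, for s ∈ ℝ, x(s) = ln( c_β² / (a·(cosh(c_β·s) + s_β)) ) and z(s) = s_β·s + 2·arctan( (e^{c_β·s} + s_β)/c_β ). Then for all s ∈ ℝ: (i) x'(s)² + z'(s)² = 1 (the curve is parametrized by arc length), and (ii) z'(s) = a·e^{x(s)} + s_β. Hence the generalized catenoid of equal strength S_{α_a^β} has geometric linear momentum 𝒦(x) = a·e^x + sin β and its principal curvature along meridians is k_m(x) = a·e^x. -/
/-- The generatrix of the generalized catenoid of equal strength is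
parametrized by arc length and satisfies z'(s) = a·e^{x(s)} + sin β, so its geometric
linear momentum is 𝒦(x) = a·e^x + sin β and k_m(x) = a·e^x. -/
theorem stmt_6 (a β : ℝ) (ha : 0 < a)
    (hβ : β ∈ Set.Ioo (-(Real.pi / 2)) (Real.pi / 2))
    (x z : ℝ → ℝ)
    (hx : ∀ s, x s = Real.log
        (Real.cos β ^ 2 / (a * (Real.cosh (Real.cos β * s) + Real.sin β))))
    (hz : ∀ s, z s = Real.sin β * s
        + 2 * Real.arctan ((Real.exp (Real.cos β * s) + Real.sin β) / Real.cos β)) :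
    ∀ s : ℝ, (deriv x s) ^ 2 + (deriv z s) ^ 2 = 1 ∧
      deriv z s = a * Real.exp (x s) + Real.sin β := by
  set c := Real.cos β with hc_def
  set b := Real.sin β with hb_def
  have hc : 0 < c := Real.cos_pos_of_mem_Ioo hβ
  have hbc : b ^ 2 + c ^ 2 = 1 := Real.sin_sq_add_cos_sq β
  have hDall : ∀ t : ℝ, 0 < Real.cosh (c * t) + b := fun t => by
    have h1 := Real.one_le_cosh (c * t)
    have hb_gt : -1 < b := by nlinarith
    linarith
  intro s
  have hD := hDall s
  have hcne : c ≠ 0 := ne_of_gt hc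
  have hDne : Real.cosh (c * s) + b ≠ 0 := ne_of_gt hD
  have hane : a ≠ 0 := ne_of_gt ha
  set e := Real.exp (c * s) with he_def
  have hepos : 0 < e := Real.exp_pos _
  have hene : e ≠ 0 := ne_of_gt hepos
  have hch : Real.cosh (c * s) = (e + e⁻¹) / 2 := by
    rw [Real.cosh_eq, Real.exp_neg]
  have hsh : Real.sinh (c * s) = (e - e⁻¹) / 2 := by
    rw [Real.sinh_eq, Real.exp_neg]
  -- derivative of x
  have hx' : HasDerivAt x (-(c * Real.sinh (c * s)) / (Real.cosh (c * s) + b)) s := by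
    have heq : x = fun t => Real.log (c ^ 2) - Real.log (a * (Real.cosh (c * t) + b)) := by
      funext t
      rw [hx t, Real.log_div (by positivity) (by have := hDall t; positivity)]
    rw [heq]
    have h := ((((hasDerivAt_id s).const_mul c).cosh.add_const b).const_mul a).log
      (by positivity)
    have h2 := h.const_sub (Real.log (c ^ 2))
    refine HasDerivAt.congr_deriv h2 ?_
    simp only [id]
    field_simp
  -- derivative of z
  have hz' : HasDerivAt z (b + c ^ 2 / (Real.cosh (c * s) + b)) s := by
    have heq : z = fun t => b * t + 2 * Real.arctan ((Real.exp (c * t) + b) / c) := by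
      funext t; exact hz t
    rw [heq]
    have hu : HasDerivAt (fun t => (Real.exp (c * t) + b) / c)
        (Real.exp (c * s) * (c * 1) / c) s :=
      (((hasDerivAt_id s).const_mul c).exp.add_const b).div_const c
    have h := ((hasDerivAt_id s).const_mul b).add (hu.arctan.const_mul 2)
    refine HasDerivAt.congr_deriv h ?_
    have key : (1 : ℝ) + ((e + b) / c) ^ 2 = 2 * e * (Real.cosh (c * s) + b) / c ^ 2 := by
      rw [hch]
      field_simp
      linear_combination hbc
    rw [key]
    field_simp
    ring
  rw [hx'.deriv, hz'.deriv]
  have hexp_x : Real.exp (x s) = c ^ 2 / (a * (Real.cosh (c * s) + b)) := by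
    rw [hx s, Real.exp_log (by positivity)]
  have hcs : Real.cosh (c * s) ^ 2 - Real.sinh (c * s) ^ 2 = 1 :=
    Real.cosh_sq_sub_sinh_sq (c * s)
  constructor
  · field_simp
    nlinarith [hbc, hcs, hD]
  · rw [hexp_x]
    field_simp
    ring
end

section
/- Let a > 0. Define, for s ∈ ℝ, x(s) = ln( 2/(a·(1+s²)) ) and z(s) = 2·arctan(s) − s. Then for all s ∈ ℝ: (i) x'(s)² + z'(s)² = 1 (the curve is a unit-speed parametrization of the alysoid), and (ii) z'(s) = a·e^{x(s)} − 1. Hence the ondualysoid S_{α_a^{−1}} has geometric linear momentum 𝒦(x) = a·e^x − 1 and its principal curvature along meridians is k_m(x) = a·e^x. -/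
/-- The alysoid generatrix of the ondualysoid is parametrized by arc length
and satisfies z'(s) = a·e^{x(s)} − 1, so its geometric linear momentum is
𝒦(x) = a·e^x − 1 and k_m(x) = a·e^x. -/
theorem stmt_7 (a : ℝ) (ha : 0 < a)
    (x z : ℝ → ℝ)
    (hx : ∀ s, x s = Real.log (2 / (a * (1 + s ^ 2))))
    (hz : ∀ s, z s = 2 * Real.arctan s - s) :
    ∀ s : ℝ, (deriv x s) ^ 2 + (deriv z s) ^ 2 = 1 ∧
      deriv z s = a * Real.exp (x s) - 1 := by
  intro s
  have hpos : ∀ t : ℝ, (0:ℝ) < a * (1 + t ^ 2) := fun t => by positivity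
  have h1s : (0:ℝ) < 1 + s ^ 2 := by positivity
  have hxe : x = fun t => (Real.log 2 - Real.log a) - Real.log (1 + t ^ 2) := by
    funext t
    rw [hx, Real.log_div (by norm_num) (ne_of_gt (hpos t)),
      Real.log_mul (ne_of_gt ha) (by positivity)]
    ring
  have hze : z = fun t => 2 * Real.arctan t - t := funext hz
  have hq : HasDerivAt (fun t : ℝ => 1 + t ^ 2) (2 * s) s := by
    simpa using (hasDerivAt_pow 2 s).const_add 1
  have hdx : HasDerivAt x (-(2 * s / (1 + s ^ 2))) s := by
    rw [hxe]
    exact (hq.log (ne_of_gt h1s)).const_sub _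
  have hdz : HasDerivAt z (2 * (1 / (1 + s ^ 2)) - 1) s := by
    rw [hze]
    exact ((Real.hasDerivAt_arctan s).const_mul 2).sub (hasDerivAt_id s)
  rw [hdx.deriv, hdz.deriv]
  constructor
  · field_simp
    ring
  · rw [hx, Real.exp_log (by positivity)]
    field_simp
end

section
/- Let a > 0 and η > 0, and write ch = cosh η, sh = sinh η. Define x(s) = ln( sh² / (a·(ch − sin(sh·s))) ) for s ∈ ℝ, and z(s) = −ch·s − 2·arctan( (1 − ch·tan(sh·s/2))/sh ) for all s ∈ ℝ such that cos(sh·s/2) ≠ 0. Then at every such s: (i) x'(s)² + z'(s)² = 1, and (ii) z'(s) = a·e^{x(s)} − ch. Hence the loopoid S_{α_a^η} has geometric linear momentum 𝒦(x) = a·e^x − cosh η and its principal curvature along meridians is k_m(x) = a·e^x. -/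
private lemma alg_W (sh ch S C W : ℝ) (hC : C ≠ 0) (hsh : sh ≠ 0)
    (hsc : S ^ 2 + C ^ 2 = 1) (hpy : ch ^ 2 = sh ^ 2 + 1)
    (hW : W = (1 - ch * (S / C)) / sh) :
    1 + W ^ 2 = ch * (ch - 2 * S * C) / (sh ^ 2 * C ^ 2) := by
  subst hW
  field_simp
  linear_combination ch ^ 2 * hsc - C ^ 2 * hpy

private lemma alg_sum (sh ch St Ct : ℝ) (h1 : St ^ 2 + Ct ^ 2 = 1)
    (h2 : ch ^ 2 = sh ^ 2 + 1) (hg : ch - St ≠ 0) :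
    (sh * Ct / (ch - St)) ^ 2 + (sh ^ 2 / (ch - St) - ch) ^ 2 = 1 := by
  field_simp
  linear_combination (ch ^ 2 - 1) * h1 + (ch ^ 2 - sh ^ 2 - Ct ^ 2 - 2 * ch * St + 1) * h2

/-- The generatrix of the loopoid is parametrized by arc length and
satisfies z'(s) = a·e^{x(s)} − cosh η at every s with cos(sinh η·s/2) ≠ 0, so its
geometric linear momentum is 𝒦(x) = a·e^x − cosh η and k_m(x) = a·e^x. -/
theorem stmt_8 (a η : ℝ) (ha : 0 < a) (hη : 0 < η)
    (x z : ℝ → ℝ)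
    (hx : ∀ s, x s = Real.log
        (Real.sinh η ^ 2 / (a * (Real.cosh η - Real.sin (Real.sinh η * s)))))
    (hz : ∀ s, Real.cos (Real.sinh η * s / 2) ≠ 0 →
        z s = -(Real.cosh η) * s - 2 * Real.arctan
          ((1 - Real.cosh η * Real.tan (Real.sinh η * s / 2)) / Real.sinh η)) :
    ∀ s : ℝ, Real.cos (Real.sinh η * s / 2) ≠ 0 →
      (deriv x s) ^ 2 + (deriv z s) ^ 2 = 1 ∧
      deriv z s = a * Real.exp (x s) - Real.cosh η := by
  intro s hc
  set sh := Real.sinh η with hsh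
  set ch := Real.cosh η with hch
  have hsh0 : 0 < sh := Real.sinh_pos_iff.2 hη
  have hpy : ch ^ 2 = sh ^ 2 + 1 := Real.cosh_sq η
  have hch0 : 0 < ch := Real.cosh_pos η
  have hch1 : 1 < ch := by nlinarith
  clear_value sh ch
  have hg : 0 < ch - Real.sin (sh * s) := by
    have := Real.sin_le_one (sh * s); linarith
  -- deriv x
  have hxeq : x = fun t => Real.log (sh ^ 2) - Real.log a
      - Real.log (ch - Real.sin (sh * t)) := by
    funext t
    have hgt : 0 < ch - Real.sin (sh * t) := by
      have := Real.sin_le_one (sh * t); linarith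
    rw [hx t, Real.log_div (by positivity) (by positivity),
      Real.log_mul (ne_of_gt ha) (ne_of_gt hgt)]
    ring
  have hginner : HasDerivAt (fun t : ℝ => sh * t) sh s := by
    simpa using (hasDerivAt_id s).const_mul sh
  have hgd : HasDerivAt (fun t => ch - Real.sin (sh * t))
      (-(Real.cos (sh * s) * sh)) s := by
    have h := (hasDerivAt_const s ch).sub ((Real.hasDerivAt_sin (sh * s)).comp s hginner)
    simp only [zero_sub] at h
    exact h
  have hxd : HasDerivAt x (sh * Real.cos (sh * s) / (ch - Real.sin (sh * s))) s := by
    rw [hxeq]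
    have h := (hasDerivAt_const s (Real.log (sh ^ 2) - Real.log a)).sub
      (hgd.log (ne_of_gt hg))
    refine h.congr_deriv ?_
    ring
  -- deriv z
  set u := sh * s / 2 with hu
  have htan : HasDerivAt (fun t => Real.tan (sh * t / 2))
      (1 / Real.cos u ^ 2 * (sh / 2)) s := by
    have h1 : HasDerivAt (fun t : ℝ => sh * t / 2) (sh / 2) s := by
      simpa using ((hasDerivAt_id s).const_mul sh).div_const 2
    exact (Real.hasDerivAt_tan hc).comp s h1
  set W : ℝ := (1 - ch * Real.tan u) / sh with hW
  have hwd : HasDerivAt (fun t => (1 - ch * Real.tan (sh * t / 2)) / sh)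
      ((-(ch * (1 / Real.cos u ^ 2 * (sh / 2)))) / sh) s := by
    simpa using ((hasDerivAt_const s (1:ℝ)).sub (htan.const_mul ch)).div_const sh
  have harc : HasDerivAt (fun t => Real.arctan ((1 - ch * Real.tan (sh * t / 2)) / sh))
      (1 / (1 + W ^ 2) * ((-(ch * (1 / Real.cos u ^ 2 * (sh / 2)))) / sh)) s :=
    by have h := (Real.hasDerivAt_arctan ((1 - ch * Real.tan (sh * s / 2)) / sh)).comp s hwd; exact h
  have hZd : HasDerivAt (fun t => -ch * t - 2 * Real.arctan
      ((1 - ch * Real.tan (sh * t / 2)) / sh))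
      (-ch - 2 * (1 / (1 + W ^ 2) * ((-(ch * (1 / Real.cos u ^ 2 * (sh / 2)))) / sh))) s := by
    have h := ((hasDerivAt_id s).const_mul (-ch)).sub (harc.const_mul 2)
    simp only [mul_one] at h
    exact h
  have hev : z =ᶠ[nhds s] fun t => -ch * t - 2 * Real.arctan
      ((1 - ch * Real.tan (sh * t / 2)) / sh) := by
    have hcont : ContinuousAt (fun t => Real.cos (sh * t / 2)) s := by fun_prop
    filter_upwards [hcont.eventually_ne hc] with t ht using hz t ht
  have hdz : deriv z s
      = -ch - 2 * (1 / (1 + W ^ 2) * ((-(ch * (1 / Real.cos u ^ 2 * (sh / 2)))) / sh)) := by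
    rw [hev.deriv_eq, hZd.deriv]
  -- algebra
  have hsc : Real.sin u ^ 2 + Real.cos u ^ 2 = 1 := Real.sin_sq_add_cos_sq u
  have hsin2 : Real.sin (sh * s) = 2 * Real.sin u * Real.cos u := by
    rw [show sh * s = 2 * u by rw [hu]; ring, Real.sin_two_mul]
  have hWval : 1 + W ^ 2 = ch * (ch - 2 * Real.sin u * Real.cos u)
      / (sh ^ 2 * Real.cos u ^ 2) :=
    alg_W sh ch (Real.sin u) (Real.cos u) W hc (ne_of_gt hsh0) hsc hpy
      (by rw [hW, Real.tan_eq_sin_div_cos])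
  have hgne : ch - 2 * Real.sin u * Real.cos u ≠ 0 := by rw [← hsin2]; exact ne_of_gt hg
  clear_value u W
  have hzval : deriv z s = sh ^ 2 / (ch - Real.sin (sh * s)) - ch := by
    rw [hdz, hWval, hsin2]
    field_simp
    ring
  have hexp : Real.exp (x s) = sh ^ 2 / (a * (ch - Real.sin (sh * s))) := by
    rw [hx s, Real.exp_log (by positivity)]
  refine ⟨?_, ?_⟩
  · rw [hxd.deriv, hzval]
    exact alg_sum sh ch (Real.sin (sh * s)) (Real.cos (sh * s))
      (Real.sin_sq_add_cos_sq (sh * s)) hpy (ne_of_gt hg)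
  · rw [hzval, hexp]
    field_simp
end

section
/- Let c < 0 and define z(x) = (1/(3√(−c)))·(x + 2c)·√(2x + c) for x > −c/2. Then z is differentiable and for all x > −c/2, z'(x)/√(1 + z'(x)²) = 1 + c/x. Consequently, the geometric linear momentum of the graph of z is 𝒦(x) = 1 + c/x, and the rotational surface generated by this graph has mean curvature H(x) = 1/(2x) (the case μ = 1/2 of mean curvature inversely proportional to the distance to the axis). -/
/-- The graph z(x) = (1/(3√(−c)))(x+2c)√(2x+c), x > −c/2, has geometric
linear momentum 𝒦(x) = 1 + c/x, and the corresponding rotational surface has mean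
curvature H(x) = 1/(2x). -/
theorem stmt_9 (c : ℝ) (hc : c < 0) (z : ℝ → ℝ)
    (hz : ∀ x, z x = (1 / (3 * Real.sqrt (-c))) * (x + 2 * c) * Real.sqrt (2 * x + c)) :
    ∀ x : ℝ, -c / 2 < x →
      DifferentiableAt ℝ z x ∧
      deriv z x / Real.sqrt (1 + (deriv z x) ^ 2) = 1 + c / x ∧
      deriv (fun y => 1 + c / y) x + (1 + c / x) / x = 2 * (1 / (2 * x)) := by
  intro x hx
  have hzf : z = fun x => (1 / (3 * Real.sqrt (-c))) * (x + 2 * c) * Real.sqrt (2 * x + c) :=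
    funext hz
  have hcpos : 0 < -c := by linarith
  have hxpos : 0 < x := lt_trans (by linarith : (0:ℝ) < -c/2) hx
  have h2xc : 0 < 2 * x + c := by linarith
  have hsa : 0 < Real.sqrt (-c) := Real.sqrt_pos.mpr hcpos
  have hsb : 0 < Real.sqrt (2 * x + c) := Real.sqrt_pos.mpr h2xc
  have hsa2 : Real.sqrt (-c) ^ 2 = -c := Real.sq_sqrt hcpos.le
  have hsb2 : Real.sqrt (2 * x + c) ^ 2 = 2 * x + c := Real.sq_sqrt h2xc.le
  have hsqrt : HasDerivAt (fun y => Real.sqrt (2 * y + c))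
      (1 / (2 * Real.sqrt (2 * x + c)) * 2) x := by
    have h1 : HasDerivAt (fun y : ℝ => 2 * y + c) 2 x := by
      simpa using ((hasDerivAt_id x).const_mul 2).add_const c
    exact (Real.hasDerivAt_sqrt (ne_of_gt h2xc)).comp x h1
  have hlin : HasDerivAt (fun y : ℝ => y + 2 * c) 1 x := (hasDerivAt_id x).add_const _
  have hmul : HasDerivAt (fun y : ℝ => (y + 2 * c) * Real.sqrt (2 * y + c))
      (1 * Real.sqrt (2 * x + c) + (x + 2 * c) * (1 / (2 * Real.sqrt (2 * x + c)) * 2)) x :=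
    hlin.mul hsqrt
  have hz' : HasDerivAt z ((1 / (3 * Real.sqrt (-c))) *
      (1 * Real.sqrt (2 * x + c) + (x + 2 * c) * (1 / (2 * Real.sqrt (2 * x + c)) * 2))) x := by
    rw [hzf]
    simpa [mul_assoc] using hmul.const_mul (1 / (3 * Real.sqrt (-c)))
  have hd : deriv z x = (x + c) / (Real.sqrt (-c) * Real.sqrt (2 * x + c)) := by
    rw [hz'.deriv]
    field_simp
    linear_combination hsb2
  refine ⟨hz'.differentiableAt, ?_, ?_⟩
  · have hsq : 1 + (deriv z x) ^ 2 = (x / (Real.sqrt (-c) * Real.sqrt (2 * x + c))) ^ 2 := by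
      rw [hd]
      field_simp
      rw [hsa2, show x * 2 + c = 2 * x + c by ring, hsb2, eq_div_iff h2xc.ne', add_mul, div_mul_cancel₀ _ h2xc.ne']
      ring
    rw [hsq, Real.sqrt_sq (by positivity), hd]
    field_simp
    rw [show x * 2 + c = 2 * x + c by ring, mul_div_assoc, div_self hsb.ne', mul_one]
  · have hdd : deriv (fun y : ℝ => 1 + c / y) x = -c / x ^ 2 := by
      simp only [div_eq_mul_inv, deriv_const_add, deriv_const_mul_field, deriv_inv]
      ring
    rw [hdd]
    field_simp
    ring
end

section
/- Let θ ∈ (0, π/2), write c_θ = cos θ, s_θ = sin θ, let c ≠ 0, and set P(x) = c_θ²·x² − 2·s_θ·c·x − c². Define z(x) = (s_θ/c_θ²)·√(P(x)) + (c/c_θ³)·ln( 2·c_θ·√(P(x)) + 2·c_θ²·x − 2·s_θ·c ) on the domain x > c/(1 − s_θ) if c > 0, and x > −c/(1 + s_θ) if c < 0. Then z is differentiable on its domain and z'(x)/√(1 + z'(x)²) = s_θ + c/x for all x in the domain. Consequently, the geometric linear momentum of the graph of z is 𝒦(x) = sin θ + c/x and the rotational surface generated by this graph has mean curvature H(x)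 = μ/x with μ = (sin θ)/2 ∈ (0, 1/2). -/
/-- The graph z_θ^c has geometric linear momentum 𝒦(x) = sin θ + c/x on
its domain, and the corresponding rotational surface has mean curvature
H(x) = μ/x with μ = (sin θ)/2. -/
theorem stmt_10 (θ c : ℝ) (hθ : θ ∈ Set.Ioo 0 (Real.pi / 2)) (hc : c ≠ 0)
    (P z : ℝ → ℝ)
    (hP : ∀ x, P x = Real.cos θ ^ 2 * x ^ 2 - 2 * Real.sin θ * c * x - c ^ 2)
    (hz : ∀ x, z x = (Real.sin θ / Real.cos θ ^ 2) * Real.sqrt (P x)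
        + (c / Real.cos θ ^ 3) * Real.log
          (2 * Real.cos θ * Real.sqrt (P x) + 2 * Real.cos θ ^ 2 * x
            - 2 * Real.sin θ * c)) :
    ∀ x : ℝ,
      ((0 < c ∧ c / (1 - Real.sin θ) < x) ∨ (c < 0 ∧ -c / (1 + Real.sin θ) < x)) →
      DifferentiableAt ℝ z x ∧
      deriv z x / Real.sqrt (1 + (deriv z x) ^ 2) = Real.sin θ + c / x ∧
      deriv (fun y => Real.sin θ + c / y) x + (Real.sin θ + c / x) / x
        = 2 * ((Real.sin θ / 2) / x) := by
  obtain ⟨hθ0, hθ2⟩ := hθ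
  set sθ := Real.sin θ with hsθ
  set cθ := Real.cos θ with hcθ
  have hcθpos : 0 < cθ := Real.cos_pos_of_mem_Ioo
    ⟨by linarith [Real.pi_pos], hθ2⟩
  have hsθpos : 0 < sθ := Real.sin_pos_of_pos_of_lt_pi hθ0
    (by linarith [Real.pi_pos])
  have hpy : sθ ^ 2 + cθ ^ 2 = 1 := Real.sin_sq_add_cos_sq θ
  have hsθlt : sθ < 1 := by
    nlinarith [hpy, pow_pos hcθpos 2]
  intro x hx
  -- basic positivity facts
  have hF1 : 0 < (1 - sθ) * x - c := by
    rcases hx with ⟨hc0, hxd⟩ | ⟨hc0, hxd⟩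
    · have h1 : (0:ℝ) < 1 - sθ := by linarith
      have := (div_lt_iff₀ h1).mp hxd
      linarith [mul_comm x (1 - sθ)]
    · have hx0 : 0 < x := lt_of_le_of_lt
        (div_nonneg (by linarith) (by linarith)) hxd
      nlinarith
  have hF2 : 0 < (1 + sθ) * x + c := by
    rcases hx with ⟨hc0, hxd⟩ | ⟨hc0, hxd⟩
    · have h1 : (0:ℝ) < 1 - sθ := by linarith
      have hx0 : 0 < x := lt_trans (by positivity) hxd
      nlinarith
    · have h1 : (0:ℝ) < 1 + sθ := by linarith
      have := (div_lt_iff₀ h1).mp hxd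
      linarith [mul_comm x (1 + sθ)]
  have hx0 : 0 < x := by nlinarith
  have hPval : P x = ((1 - sθ) * x - c) * ((1 + sθ) * x + c) := by
    rw [hP]; nlinarith [hpy]
  have hPpos : 0 < P x := by rw [hPval]; exact mul_pos hF1 hF2
  set Q := Real.sqrt (P x) with hQdef
  have hQpos : 0 < Q := Real.sqrt_pos.mpr hPpos
  have hQsq : Q ^ 2 = cθ ^ 2 * x ^ 2 - 2 * sθ * c * x - c ^ 2 := by
    rw [hQdef, Real.sq_sqrt hPpos.le, hP]
  have hP'pos : 0 < 2 * cθ ^ 2 * x - 2 * sθ * c := by nlinarith [hpy]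
  have hApos : 0 < 2 * cθ * Q + 2 * cθ ^ 2 * x - 2 * sθ * c := by
    have : 0 < 2 * cθ * Q := by positivity
    linarith
  -- rewrite z as an explicit function
  have hzfun : z = fun y => (sθ / cθ ^ 2) *
      Real.sqrt (cθ ^ 2 * y ^ 2 - 2 * sθ * c * y - c ^ 2)
      + (c / cθ ^ 3) * Real.log
        (2 * cθ * Real.sqrt (cθ ^ 2 * y ^ 2 - 2 * sθ * c * y - c ^ 2)
          + 2 * cθ ^ 2 * y - 2 * sθ * c) := by
    funext y; rw [hz, hP]
  -- derivative of the inner polynomial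
  have hPd : HasDerivAt (fun y : ℝ => cθ ^ 2 * y ^ 2 - 2 * sθ * c * y - c ^ 2)
      (2 * cθ ^ 2 * x - 2 * sθ * c) x := by
    have h1 := (hasDerivAt_pow 2 x).const_mul (cθ ^ 2)
    have h2 := (hasDerivAt_id x).const_mul (2 * sθ * c)
    have := (h1.sub h2).sub_const (c ^ 2)
    refine this.congr_deriv ?_
    push_cast; ring
  have hPx : (fun y : ℝ => cθ ^ 2 * y ^ 2 - 2 * sθ * c * y - c ^ 2) x = P x := by
    rw [hP]
  have hPxne : cθ ^ 2 * x ^ 2 - 2 * sθ * c * x - c ^ 2 ≠ 0 := by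
    rw [← hP x]; exact hPpos.ne'
  -- derivative of the square root part
  have hQd : HasDerivAt
      (fun y : ℝ => Real.sqrt (cθ ^ 2 * y ^ 2 - 2 * sθ * c * y - c ^ 2))
      ((2 * cθ ^ 2 * x - 2 * sθ * c) / (2 * Q)) x := by
    have := hPd.sqrt hPxne
    simpa [hQdef, hP] using this
  -- derivative of the log argument
  have hAd : HasDerivAt
      (fun y : ℝ => 2 * cθ * Real.sqrt (cθ ^ 2 * y ^ 2 - 2 * sθ * c * y - c ^ 2)
        + 2 * cθ ^ 2 * y - 2 * sθ * c)
      (2 * cθ * ((2 * cθ ^ 2 * x - 2 * sθ * c) / (2 * Q)) + 2 * cθ ^ 2) x := by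
    have h1 := hQd.const_mul (2 * cθ)
    have h2 := (hasDerivAt_id x).const_mul (2 * cθ ^ 2)
    have := (h1.add h2).sub_const (2 * sθ * c)
    simpa [mul_comm] using this
  have hAx : 2 * cθ * Real.sqrt (cθ ^ 2 * x ^ 2 - 2 * sθ * c * x - c ^ 2)
      + 2 * cθ ^ 2 * x - 2 * sθ * c ≠ 0 := by
    rw [← hP x]; exact hApos.ne'
  have hLd : HasDerivAt
      (fun y : ℝ => Real.log
        (2 * cθ * Real.sqrt (cθ ^ 2 * y ^ 2 - 2 * sθ * c * y - c ^ 2)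
          + 2 * cθ ^ 2 * y - 2 * sθ * c))
      ((2 * cθ * ((2 * cθ ^ 2 * x - 2 * sθ * c) / (2 * Q)) + 2 * cθ ^ 2)
        / (2 * cθ * Q + 2 * cθ ^ 2 * x - 2 * sθ * c)) x := by
    have := hAd.log hAx
    simpa [hQdef, hP] using this
  -- total derivative of z
  have hzd : HasDerivAt z
      ((sθ / cθ ^ 2) * ((2 * cθ ^ 2 * x - 2 * sθ * c) / (2 * Q))
        + (c / cθ ^ 3) * ((2 * cθ * ((2 * cθ ^ 2 * x - 2 * sθ * c) / (2 * Q)) + 2 * cθ ^ 2)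
          / (2 * cθ * Q + 2 * cθ ^ 2 * x - 2 * sθ * c))) x := by
    rw [hzfun]
    exact (hQd.const_mul (sθ / cθ ^ 2)).add (hLd.const_mul (c / cθ ^ 3))
  -- simplify the derivative
  have hAne : (2 * cθ * Q + 2 * cθ ^ 2 * x - 2 * sθ * c) ≠ 0 := hApos.ne'
  have h2 : (2 * cθ * ((2 * cθ ^ 2 * x - 2 * sθ * c) / (2 * Q)) + 2 * cθ ^ 2)
        / (2 * cθ * Q + 2 * cθ ^ 2 * x - 2 * sθ * c) = cθ / Q := by
    rw [div_eq_div_iff hAne hQpos.ne']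
    field_simp
    ring
  have hnum : sθ * (2 * cθ ^ 2 * x - 2 * sθ * c) + 2 * c
      = 2 * cθ ^ 2 * (sθ * x + c) := by
    linear_combination (-2 * c) * hpy
  have hkey : (sθ / cθ ^ 2) * ((2 * cθ ^ 2 * x - 2 * sθ * c) / (2 * Q))
        + (c / cθ ^ 3) * ((2 * cθ * ((2 * cθ ^ 2 * x - 2 * sθ * c) / (2 * Q)) + 2 * cθ ^ 2)
          / (2 * cθ * Q + 2 * cθ ^ 2 * x - 2 * sθ * c))
      = (sθ * x + c) / Q := by
    rw [h2]
    have step : (sθ / cθ ^ 2) * ((2 * cθ ^ 2 * x - 2 * sθ * c) / (2 * Q))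
        + (c / cθ ^ 3) * (cθ / Q)
        = (sθ * (2 * cθ ^ 2 * x - 2 * sθ * c) + 2 * c) / (2 * cθ ^ 2 * Q) := by
      field_simp
    rw [step, hnum]
    rw [div_eq_div_iff (by positivity) hQpos.ne']
    ring
  have hzd' : HasDerivAt z ((sθ * x + c) / Q) x := hkey ▸ hzd
  have hdz : deriv z x = (sθ * x + c) / Q := hzd'.deriv
  refine ⟨hzd'.differentiableAt, ?_, ?_⟩
  · rw [hdz]
    have hq2 : (sθ * x + c) ^ 2 + Q ^ 2 = x ^ 2 := by
      rw [hQsq]; linear_combination x ^ 2 * hpy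
    have hsum : 1 + ((sθ * x + c) / Q) ^ 2 = (x / Q) ^ 2 := by
      rw [div_pow, div_pow, eq_div_iff (pow_ne_zero 2 hQpos.ne'), add_mul,
        div_mul_cancel₀ _ (pow_ne_zero 2 hQpos.ne'), one_mul]
      linear_combination hq2
    rw [hsum, Real.sqrt_sq (by positivity)]
    field_simp
  · have hinv : HasDerivAt (fun y : ℝ => sθ + c / y) (c * (-(x ^ 2)⁻¹)) x := by
      have := ((hasDerivAt_inv hx0.ne').const_mul c).const_add sθ
      simpa [div_eq_mul_inv] using this
    rw [hinv.deriv]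
    field_simp
    ring
end

section
/- Let δ > 0, write ch = cosh δ, sh = sinh δ, let c < 0, and set P(x) = −sh²·x² − 2·ch·c·x − c². Define z(x) = −(ch/sh²)·√(P(x)) + (c/sh³)·arcsin( (sh²·x + ch·c)/c ) on the domain −c/(1 + ch) < x < −c/(ch − 1). Then z is differentiable on its domain and z'(x)/√(1 + z'(x)²) = ch + c/x for all x in the domain. Consequently, the geometric linear momentum of the graph of z is 𝒦(x) = cosh δ + c/x and the rotational surface generated by this graph has mean curvature H(x) = μ/x with μ = (cosh δ)/2 > 1/2. -/
/-- The graph z_δ^c has geometric linear momentum 𝒦(x) = cosh δ + c/x on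
its domain, and the corresponding rotational surface has mean curvature
H(x) = μ/x with μ = (cosh δ)/2. -/
theorem stmt_11 (δ c : ℝ) (hδ : 0 < δ) (hc : c < 0)
    (P z : ℝ → ℝ)
    (hP : ∀ x, P x = -(Real.sinh δ ^ 2) * x ^ 2 - 2 * Real.cosh δ * c * x - c ^ 2)
    (hz : ∀ x, z x = -(Real.cosh δ / Real.sinh δ ^ 2) * Real.sqrt (P x)
        + (c / Real.sinh δ ^ 3) * Real.arcsin
          ((Real.sinh δ ^ 2 * x + Real.cosh δ * c) / c)) :
    ∀ x : ℝ, -c / (1 + Real.cosh δ) < x → x < -c / (Real.cosh δ - 1) →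
      DifferentiableAt ℝ z x ∧
      deriv z x / Real.sqrt (1 + (deriv z x) ^ 2) = Real.cosh δ + c / x ∧
      deriv (fun y => Real.cosh δ + c / y) x + (Real.cosh δ + c / x) / x
        = 2 * ((Real.cosh δ / 2) / x) := by
  have hPe : P = fun x => -(Real.sinh δ ^ 2) * x ^ 2 - 2 * Real.cosh δ * c * x - c ^ 2 :=
    funext hP
  have hze : z = fun x => -(Real.cosh δ / Real.sinh δ ^ 2) * Real.sqrt (P x)
        + (c / Real.sinh δ ^ 3) * Real.arcsin
          ((Real.sinh δ ^ 2 * x + Real.cosh δ * c) / c) := funext hz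
  subst hze; subst hPe
  clear hP hz
  intro x hx1 hx2
  set s := Real.sinh δ with hs_def
  set h := Real.cosh δ with hh_def
  have hs : 0 < s := Real.sinh_pos_iff.mpr hδ
  have hh1 : 1 < h := Real.one_lt_cosh.mpr hδ.ne'
  have hsq : h ^ 2 - s ^ 2 = 1 := Real.cosh_sq_sub_sinh_sq δ
  clear_value s h
  clear hs_def hh_def
  have hcne : c ≠ 0 := hc.ne
  have hh1' : (0:ℝ) < 1 + h := by linarith
  have hhm1 : (0:ℝ) < h - 1 := by linarith
  have hd1 : -c < x * (1 + h) := by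
    have := (div_lt_iff₀ hh1').mp hx1; linarith
  have hd2 : x * (h - 1) < -c := by
    have := (lt_div_iff₀ hhm1).mp hx2; linarith
  have hx0 : 0 < x := by nlinarith
  have f1 : 0 < (1 + h) * x + c := by nlinarith
  have f2 : 0 < -((h - 1) * x) - c := by nlinarith
  have hPx : 0 < -(s ^ 2) * x ^ 2 - 2 * h * c * x - c ^ 2 := by
    nlinarith [mul_pos f1 f2]
  set q := Real.sqrt (-(s ^ 2) * x ^ 2 - 2 * h * c * x - c ^ 2) with hq_def
  have hq : 0 < q := Real.sqrt_pos.mpr hPx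
  have hq2 : q ^ 2 = -(s ^ 2) * x ^ 2 - 2 * h * c * x - c ^ 2 := Real.sq_sqrt hPx.le
  set u := (s ^ 2 * x + h * c) / c with hu_def
  have hn1 : 0 < s ^ 2 * x + h * c - c := by nlinarith [mul_pos hhm1 f1]
  have hn2 : s ^ 2 * x + h * c + c < 0 := by nlinarith [mul_pos hh1' f2]
  have hu1 : -1 < u := by
    have he : u + 1 = (s ^ 2 * x + h * c + c) / c := by
      rw [hu_def]; field_simp
    have : 0 < u + 1 := he ▸ div_pos_of_neg_of_neg hn2 hc
    linarith
  have hu2 : u < 1 := by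
    have he : u - 1 = (s ^ 2 * x + h * c - c) / c := by
      rw [hu_def]; field_simp
    have : u - 1 < 0 := he ▸ div_neg_of_pos_of_neg hn1 hc
    linarith
  have h1u : 1 - u ^ 2 = s ^ 2 * (-(s ^ 2) * x ^ 2 - 2 * h * c * x - c ^ 2) / c ^ 2 := by
    rw [hu_def]
    field_simp
    linear_combination (-(c ^ 2)) * hsq
  have hsu : Real.sqrt (1 - u ^ 2) = s * q / (-c) := by
    rw [h1u, show s ^ 2 * (-(s ^ 2) * x ^ 2 - 2 * h * c * x - c ^ 2) / c ^ 2
        = (s * q / (-c)) ^ 2 by rw [div_pow, mul_pow, hq2]; ring]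
    exact Real.sqrt_sq (div_nonneg (by positivity) (by linarith))
  clear_value q
  -- derivative of P
  have hPd : HasDerivAt (fun y : ℝ => -(s ^ 2) * y ^ 2 - 2 * h * c * y - c ^ 2)
      (-(s ^ 2) * (2 * x) - 2 * h * c) x := by
    have h1 := (hasDerivAt_pow 2 x).const_mul (-(s ^ 2))
    have h2 := (hasDerivAt_id x).const_mul (2 * h * c)
    simpa using (h1.sub h2).sub_const (c ^ 2)
  have hSd : HasDerivAt (fun y : ℝ => Real.sqrt (-(s ^ 2) * y ^ 2 - 2 * h * c * y - c ^ 2))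
      ((-(s ^ 2) * (2 * x) - 2 * h * c) / (2 * q)) x := by
    have := hPd.sqrt hPx.ne'
    rwa [← hq_def] at this
  have hlin : HasDerivAt (fun y : ℝ => (s ^ 2 * y + h * c) / c) (s ^ 2 / c) x := by
    have h1 := ((hasDerivAt_id x).const_mul (s ^ 2)).add_const (h * c)
    simpa using h1.div_const c
  have hA : HasDerivAt (fun y : ℝ => Real.arcsin ((s ^ 2 * y + h * c) / c))
      (1 / Real.sqrt (1 - u ^ 2) * (s ^ 2 / c)) x := by
    have := (Real.hasDerivAt_arcsin hu1.ne' hu2.ne).comp x hlin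
    simpa [Function.comp_def] using this
  have hzd : HasDerivAt (fun y : ℝ => -(h / s ^ 2) *
        Real.sqrt (-(s ^ 2) * y ^ 2 - 2 * h * c * y - c ^ 2)
        + c / s ^ 3 * Real.arcsin ((s ^ 2 * y + h * c) / c))
      (-(h / s ^ 2) * ((-(s ^ 2) * (2 * x) - 2 * h * c) / (2 * q))
        + c / s ^ 3 * (1 / Real.sqrt (1 - u ^ 2) * (s ^ 2 / c))) x :=
    (hSd.const_mul _).add (hA.const_mul _)
  have hD : -(h / s ^ 2) * ((-(s ^ 2) * (2 * x) - 2 * h * c) / (2 * q))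
      + c / s ^ 3 * (1 / Real.sqrt (1 - u ^ 2) * (s ^ 2 / c)) = (h * x + c) / q := by
    rw [hsu]
    field_simp
    linear_combination c * hsq
  have hderiv : deriv (fun y : ℝ => -(h / s ^ 2) *
        Real.sqrt (-(s ^ 2) * y ^ 2 - 2 * h * c * y - c ^ 2)
        + c / s ^ 3 * Real.arcsin ((s ^ 2 * y + h * c) / c)) x = (h * x + c) / q := by
    rw [hzd.deriv]; exact hD
  refine ⟨hzd.differentiableAt, ?_, ?_⟩
  · rw [hderiv]
    have key2 : q ^ 2 + (h * x + c) ^ 2 = x ^ 2 := by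
      linear_combination hq2 + x ^ 2 * hsq
    have key : 1 + ((h * x + c) / q) ^ 2 = (x / q) ^ 2 := by
      rw [div_pow, div_pow]
      field_simp
      linear_combination key2
    rw [key, Real.sqrt_sq (by positivity)]
    field_simp
  · have hinv : HasDerivAt (fun y : ℝ => h + c / y) (c * -(x ^ 2)⁻¹) x := by
      simpa [div_eq_mul_inv] using ((hasDerivAt_inv hx0.ne').const_mul c).const_add h
    rw [hinv.deriv]
    field_simp
    ring
end

section
/- Let R > 0 and a ∈ ℝ, and define the translated cycloid C_a^R by x(t) = a + R·(1 − cos t), z(t) = R·(t − sin t − π) for t ∈ (0, 2π). Then for all t ∈ (0, 2π), z'(t)/√(x'(t)² + z'(t)²) = √( (x(t) − a)/(2R) ). In particular, the geometric linear momentum of C_a^R as a function of the distance x to the z-axis is 𝒦(x) = √((x − a)/(2R)). -/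
/-- The translated cycloid C_a^R, x(t) = a + R(1−cos t),
z(t) = R(t − sin t − π), t ∈ (0, 2π), has geometric linear momentum
𝒦(x) = √((x − a)/(2R)). -/
theorem stmt_12 (R a : ℝ) (hR : 0 < R)
    (x z : ℝ → ℝ)
    (hx : ∀ t, x t = a + R * (1 - Real.cos t))
    (hz : ∀ t, z t = R * (t - Real.sin t - Real.pi)) :
    ∀ t ∈ Set.Ioo 0 (2 * Real.pi),
      deriv z t / Real.sqrt ((deriv x t) ^ 2 + (deriv z t) ^ 2)
        = Real.sqrt ((x t - a) / (2 * R)) := by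
  have hxf : x = fun t => a + R * (1 - Real.cos t) := funext hx
  have hzf : z = fun t => R * (t - Real.sin t - Real.pi) := funext hz
  subst hxf hzf
  intro t ht
  obtain ⟨ht0, ht2⟩ := ht
  -- derivatives
  have hdx : deriv (fun t => a + R * (1 - Real.cos t)) t = R * Real.sin t := by
    have h : HasDerivAt (fun t => a + R * (1 - Real.cos t)) (R * Real.sin t) t := by
      have h1 : HasDerivAt (fun t : ℝ => 1 - Real.cos t) (Real.sin t) t := by
        simpa using (Real.hasDerivAt_cos t).const_sub 1
      simpa using (h1.const_mul R).const_add a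
    exact h.deriv
  have hdz : deriv (fun t => R * (t - Real.sin t - Real.pi)) t = R * (1 - Real.cos t) := by
    have h : HasDerivAt (fun t : ℝ => R * (t - Real.sin t - Real.pi))
        (R * (1 - Real.cos t)) t := by
      have h1 : HasDerivAt (fun t : ℝ => t - Real.sin t - Real.pi) (1 - Real.cos t) t := by
        simpa using ((hasDerivAt_id t).sub (Real.hasDerivAt_sin t)).sub_const Real.pi
      exact h1.const_mul R
    exact h.deriv
  rw [hdx, hdz]
  simp only [hx]
  set c := 1 - Real.cos t with hc
  have hclt : Real.cos t < 1 := by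
    rcases lt_or_eq_of_le (Real.cos_le_one t) with h | h
    · exact h
    · exfalso
      have := (Real.cos_eq_one_iff_of_lt_of_lt
        (by linarith [Real.pi_pos] : -(2 * Real.pi) < t) ht2).mp h
      linarith
  have hcpos : 0 < c := by simp [hc]; linarith
  have hRc : 0 < R * c := mul_pos hR hcpos
  have hsum : (R * Real.sin t) ^ 2 + (R * c) ^ 2 = 2 * c * R ^ 2 := by
    have hpy := Real.sin_sq_add_cos_sq t
    simp only [hc]; nlinarith [hpy]
  rw [hsum]
  have harg : (a + R * c - a) / (2 * R) = c / 2 := by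
    field_simp
    ring
  rw [harg]
  have hs2c : Real.sqrt (2 * c * R ^ 2) = Real.sqrt (2 * c) * R := by
    rw [Real.sqrt_mul (by positivity), Real.sqrt_sq hR.le]
  rw [hs2c]
  have h2c : (0:ℝ) < 2 * c := by linarith
  have hkey : Real.sqrt (c / 2) = c / Real.sqrt (2 * c) := by
    rw [show c / 2 = (c / Real.sqrt (2 * c)) ^ 2 by
      rw [div_pow, Real.sq_sqrt h2c.le]
      field_simp]
    exact Real.sqrt_sq (by positivity)
  rw [hkey]
  rw [show R * c / (Real.sqrt (2 * c) * R) = c / Real.sqrt (2 * c) by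
    field_simp]
end

section
/- Let I ⊆ (0,∞) be an interval and 𝒦 : I → ℝ a differentiable function; define H(x) = (𝒦'(x) + 𝒦(x)/x)/2 for x ∈ I, and let G : I → ℝ be any differentiable function with G'(x) = x·H(x) for all x ∈ I. Then there exists a constant Γ ∈ ℝ such that the function g(x) := (G(x) + Γ)²/x² is differentiable on I and 𝒦(x)·𝒦'(x)/x = (2/x)·g'(x) for all x ∈ I. In other words, for a rotational surface with mean curvature H = H(x), the Gauss curvature is given by K_G(x) = (2/x)·d/dx( (∫x·H(x)dx)²/x² ), where the antiderivative carries one free constant. -/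
/-- Constraint between mean and Gauss curvature of a rotational surface:
K_G(x) = (2/x)·d/dx((∫x·H(x)dx)²/x²) for a suitable choice Γ of the integration
constant. -/
theorem stmt_14 (I : Set ℝ) (hI : I.OrdConnected) (hI0 : I ⊆ Set.Ioi 0)
    (K H G : ℝ → ℝ) (hK : ∀ x ∈ I, DifferentiableAt ℝ K x)
    (hH : ∀ x ∈ I, H x = (deriv K x + K x / x) / 2)
    (hG : ∀ x ∈ I, HasDerivAt G (x * H x) x) :
    ∃ Γ : ℝ,
      (∀ x ∈ I, DifferentiableAt ℝ (fun y => (G y + Γ) ^ 2 / y ^ 2) x) ∧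
      (∀ x ∈ I, K x * deriv K x / x
          = (2 / x) * deriv (fun y => (G y + Γ) ^ 2 / y ^ 2) x) := by
  rcases Set.eq_empty_or_nonempty I with rfl | ⟨x₀, hx₀⟩
  · exact ⟨0, fun x hx => absurd hx (Set.notMem_empty x),
      fun x hx => absurd hx (Set.notMem_empty x)⟩
  have hconv : Convex ℝ I := convex_iff_ordConnected.mpr hI
  have key : ∀ x ∈ I, HasDerivAt (fun y => G y - y * K y / 2) 0 x := by
    intro x hx
    have hxpos : (0:ℝ) < x := hI0 hx
    have h2 : HasDerivAt (fun y => y * K y / 2)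
        ((1 * K x + x * deriv K x) / 2) x :=
      ((hasDerivAt_id x).mul (hK x hx).hasDerivAt).div_const 2
    have h3 : HasDerivAt (fun y => G y - y * K y / 2) _ x := (hG x hx).sub h2
    convert h3 using 1
    rw [hH x hx]
    field_simp
    ring
  have hc : ∀ x ∈ I, G x - x * K x / 2 = G x₀ - x₀ * K x₀ / 2 := by
    intro x hx
    have hle := Convex.norm_image_sub_le_of_norm_hasDerivWithin_le
      (f := fun y => G y - y * K y / 2) (f' := fun _ => (0:ℝ)) (C := 0)
      (fun y hy => (key y hy).hasDerivWithinAt)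
      (fun y _ => by simp) hconv hx₀ hx
    simp only [Real.norm_eq_abs, zero_mul] at hle
    have h0 : |G x - x * K x / 2 - (G x₀ - x₀ * K x₀ / 2)| = 0 :=
      le_antisymm hle (abs_nonneg _)
    have := abs_eq_zero.mp h0
    linarith
  refine ⟨-(G x₀ - x₀ * K x₀ / 2), fun x hx => ?_, fun x hx => ?_⟩
  · have hxpos : (0:ℝ) < x := hI0 hx
    exact DifferentiableAt.div (((hG x hx).differentiableAt.add_const _).pow 2)
      (differentiableAt_pow 2) (by positivity)
  · have hxpos : (0:ℝ) < x := hI0 hx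
    set Γ := -(G x₀ - x₀ * K x₀ / 2) with hΓ
    have hGx : G x + Γ = x * K x / 2 := by
      have := hc x hx; rw [hΓ]; linarith
    have hu : HasDerivAt (fun y => (G y + Γ) ^ 2)
        ((2:ℕ) * (G x + Γ) ^ 1 * (x * H x)) x := ((hG x hx).add_const Γ).pow 2
    have hv : HasDerivAt (fun y => y ^ 2) ((2:ℕ) * x ^ 1) x := hasDerivAt_pow 2 x
    have hd : HasDerivAt (fun y => (G y + Γ) ^ 2 / y ^ 2) _ x := hu.div hv (by positivity)
    rw [hd.deriv]
    rw [hGx, hH x hx]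
    field_simp
    ring
end

section
/- Let I ⊆ (0,∞) be an interval, μ > 0, n ∈ ℝ with n ≠ −2, and let 𝒦 : I → ℝ be a differentiable function satisfying 𝒦'(x) + 𝒦(x)/x = 2μ·x^n for all x ∈ I (so the corresponding rotational surface has mean curvature H(x) = μ·x^n). Then there exists a constant Γ ∈ ℝ (the Gaussian constant) such that for all x ∈ I: 𝒦(x) = (2μ/(n+2))·x^{n+1} + 2Γ/x, and the Gauss curvature satisfies 𝒦(x)·𝒦'(x)/x = (4(n+1)μ²/(n+2)²)·x^{2n} + (4nΓμ/(n+2))·x^{n−2} − 4Γ²/x⁴. Moreover, if Γ = 0 then 𝒦(x) = (2μ/(n+2))·x^{n+1} for all x ∈ I, i.e., the surface is the Hopf–Kühnel surface S_{α_q} with q = n+1 when n ≠ −1, and the circular cone with opening arcsin(2μ) when n = −1. -/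
open Real

lemma aux_const (I : Set ℝ) (hI : I.OrdConnected) (g : ℝ → ℝ)
    (hg : ∀ x ∈ I, HasDerivAt g 0 x) {x y : ℝ} (hx : x ∈ I) (hy : y ∈ I) :
    g x = g y := by
  have hconv : Convex ℝ I := hI.convex
  have := hconv.norm_image_sub_le_of_norm_hasFDerivWithin_le
    (f := g) (f' := fun _ => (0 : ℝ →L[ℝ] ℝ))
    (fun z hz => by
      have := (hg z hz).hasFDerivAt.hasFDerivWithinAt (s := I)
      have h0 : ContinuousLinearMap.toSpanSingleton ℝ (0:ℝ) = 0 := by ext v; simp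
      rw [h0] at this
      exact this)
    (C := 0) (fun z _ => by simp) hx hy
  have : ‖g y - g x‖ ≤ 0 := by simpa using this
  have := norm_nonneg (g y - g x)
  have h0 : g y - g x = 0 := by
    have : ‖g y - g x‖ = 0 := le_antisymm ‹‖g y - g x‖ ≤ 0› (norm_nonneg _)
    simpa [norm_eq_zero] using this
  linarith [sub_eq_zero.mp h0]

/-- For a rotational surface with mean curvature H(x) = μ·x^n, n ≠ −2,
there is a Gaussian constant Γ with 𝒦(x) = (2μ/(n+2))·x^{n+1} + 2Γ/x, and the Gauss
curvature is given by the monomial formula; if Γ = 0 the surface is the Hopf–Kühnel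
surface S_{α_{n+1}} (the cone of opening arcsin 2μ when n = −1). -/
theorem stmt_15 (I : Set ℝ) (hI : I.OrdConnected) (hI0 : I ⊆ Set.Ioi 0)
    (μ n : ℝ) (hμ : 0 < μ) (hn : n ≠ -2)
    (K : ℝ → ℝ) (hK : ∀ x ∈ I, DifferentiableAt ℝ K x)
    (hode : ∀ x ∈ I, deriv K x + K x / x = 2 * μ * x ^ n) :
    ∃ Γ : ℝ,
      (∀ x ∈ I, K x = (2 * μ / (n + 2)) * x ^ (n + 1) + 2 * Γ / x) ∧
      (∀ x ∈ I, K x * deriv K x / x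
          = (4 * (n + 1) * μ ^ 2 / (n + 2) ^ 2) * x ^ (2 * n)
            + (4 * n * Γ * μ / (n + 2)) * x ^ (n - 2)
            - 4 * Γ ^ 2 / x ^ 4) ∧
      (Γ = 0 → ∀ x ∈ I, K x = (2 * μ / (n + 2)) * x ^ (n + 1)) := by
  have hn2 : n + 2 ≠ 0 := fun h => hn (by linarith)
  rcases Set.eq_empty_or_nonempty I with hIe | ⟨x₀, hx₀⟩
  · exact ⟨0, fun x hx => by simp [hIe] at hx, fun x hx => by simp [hIe] at hx,
      fun _ x hx => by simp [hIe] at hx⟩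
  set g : ℝ → ℝ := fun x => x * K x - (2 * μ / (n + 2)) * x ^ (n + 2) with hg_def
  have hgd : ∀ x ∈ I, HasDerivAt g 0 x := by
    intro x hx
    have hxpos : (0 : ℝ) < x := hI0 hx
    have h1 : HasDerivAt (fun x : ℝ => x * K x) (1 * K x + x * deriv K x) x :=
      (hasDerivAt_id x).mul (hK x hx).hasDerivAt
    have h2 : HasDerivAt (fun x : ℝ => (2 * μ / (n + 2)) * x ^ (n + 2))
        ((2 * μ / (n + 2)) * ((n + 2) * x ^ (n + 2 - 1))) x :=
      (Real.hasDerivAt_rpow_const (Or.inl hxpos.ne')).const_mul _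
    have h3 := h1.sub h2
    refine h3.congr_deriv (Eq.symm ?_)
    have hode' := hode x hx
    have hxne : x ≠ 0 := hxpos.ne'
    have hd : deriv K x = 2 * μ * x ^ n - K x / x := by linarith
    have hr1 : x ^ (n + 2 - 1) = x ^ n * x := by
      rw [show n + 2 - 1 = n + 1 by ring, Real.rpow_add hxpos, Real.rpow_one]
    rw [hd, hr1]
    field_simp
    ring
  refine ⟨g x₀ / 2, ?_, ?_, ?_⟩ <;> [skip; skip; intro hΓ] <;> intro x hx <;>
    have hxpos : (0 : ℝ) < x := hI0 hx <;>
    have hxne : x ≠ 0 := hxpos.ne' <;>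
    have hgc : g x = g x₀ := aux_const I hI g hgd hx hx₀ <;>
    have hKx : K x = (2 * μ / (n + 2)) * x ^ (n + 1) + 2 * (g x₀ / 2) / x := by
      have : x * K x - (2 * μ / (n + 2)) * x ^ (n + 2) = g x₀ := hgc
      have hr : x ^ (n + 2) = x ^ (n + 1) * x := by
        rw [show n + 2 = (n + 1) + 1 by ring, Real.rpow_add hxpos, Real.rpow_one]
      field_simp at this ⊢
      rw [hr] at this
      linarith
  · exact hKx
  · have hode' := hode x hx
    have hd : deriv K x = 2 * μ * x ^ n - K x / x := by linarith
    rw [hd, hKx]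
    set Γ := g x₀ / 2
    have e1 : x ^ (n + 1) = x ^ n * x := by rw [Real.rpow_add hxpos, Real.rpow_one]
    have e2 : x ^ (2 * n) = (x ^ n) ^ 2 := by
      rw [mul_comm, ← Real.rpow_natCast (x ^ n) 2, ← Real.rpow_mul hxpos.le]
      norm_num
    have e3 : x ^ (n - 2) = x ^ n / x ^ (2 : ℕ) := by
      rw [show n - 2 = n + (-2) by ring, Real.rpow_add hxpos,
        Real.rpow_neg hxpos.le, show ((2:ℝ)) = ((2:ℕ):ℝ) by norm_num,
        Real.rpow_natCast, div_eq_mul_inv]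
    rw [e1, e2, e3]
    field_simp
    ring
  · rw [hKx, hΓ]
    simp
end

section
/- Let I ⊆ (0,∞) be a nontrivial interval, μ > 0 and λ ≠ 0. If 𝒦 : I → ℝ is a differentiable function satisfying 𝒦'(x) + 𝒦(x)/x = 2μ·x and 𝒦(x)·𝒦'(x)/x = λ·x² for all x ∈ I, then λ = 8μ²/9 and 𝒦(x) = (2μ/3)·x² for all x ∈ I. Hence the Mylar balloons (with inflated radius r satisfying 1/r² = 2μ/3) are the only rotational surfaces with mean curvature H(x) = μ·x and Gauss curvature K_G(x) = λ·x², x being the distance from the surface to the axis of revolution. -/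
/-- The Mylar balloons are the only rotational surfaces with mean
curvature H(x) = μ·x and Gauss curvature K_G(x) = λ·x²: necessarily λ = 8μ²/9 and
𝒦(x) = (2μ/3)·x². -/
theorem stmt_16 (I : Set ℝ) (hI : I.OrdConnected) (hI0 : I ⊆ Set.Ioi 0)
    (hne : I.Nontrivial) (μ lam : ℝ) (hμ : 0 < μ) (hlam : lam ≠ 0)
    (K : ℝ → ℝ) (hK : ∀ x ∈ I, DifferentiableAt ℝ K x)
    (hH : ∀ x ∈ I, deriv K x + K x / x = 2 * μ * x)
    (hKG : ∀ x ∈ I, K x * deriv K x / x = lam * x ^ 2) :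
    lam = 8 * μ ^ 2 / 9 ∧ ∀ x ∈ I, K x = (2 * μ / 3) * x ^ 2 := by
  have hpos : ∀ x ∈ I, (0:ℝ) < x := fun x hx => hI0 hx
  -- the pointwise quadratic relation
  have key : ∀ x ∈ I, (K x - μ * x ^ 2) ^ 2 = (μ ^ 2 - lam) * x ^ 4 := by
    intro x hx
    have hx0 : (0:ℝ) < x := hpos x hx
    have h1 := hH x hx
    have h2 := hKG x hx
    have hd : deriv K x = 2 * μ * x - K x / x := by linarith
    rw [hd] at h2
    have hxne : x ≠ 0 := ne_of_gt hx0
    field_simp at h2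
    nlinarith [h2]
  set g : ℝ → ℝ := fun x => K x / x ^ 2 - μ with hg
  have hgsq : ∀ x ∈ I, g x ^ 2 = μ ^ 2 - lam := by
    intro x hx
    have hx0 := hpos x hx
    have hk := key x hx
    have hxne : x ≠ 0 := ne_of_gt hx0
    have h4 : (x:ℝ) ^ 4 ≠ 0 := by positivity
    have hgx : g x ^ 2 = (K x - μ * x ^ 2) ^ 2 / x ^ 4 := by
      simp only [hg]; field_simp
    rw [hgx, hk]
    field_simp
  -- continuity of g on I
  have hcg : ContinuousOn g I := by
    intro x hx
    have hx0 := hpos x hx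
    exact ((hK x hx).continuousAt.continuousWithinAt.div
      ((continuous_pow 2).continuousWithinAt) (by positivity)).sub
      continuousWithinAt_const
  -- g is constant on I
  have hconst : ∀ x ∈ I, ∀ y ∈ I, g x = g y := by
    intro x hx y hy
    by_contra hne'
    have hsq : g x ^ 2 = g y ^ 2 := by rw [hgsq x hx, hgsq y hy]
    have hfac : (g x - g y) * (g x + g y) = 0 := by nlinarith
    have hxy : g x = - g y := by
      rcases mul_eq_zero.1 hfac with h | h
      · exact absurd (by linarith : g x = g y) hne'
      · linarith
    have hsub : Set.uIcc x y ⊆ I := hI.uIcc_subset hx hy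
    have hcg' : ContinuousOn g (Set.uIcc x y) := hcg.mono hsub
    have h0 : (0:ℝ) ∈ Set.uIcc (g x) (g y) := by
      rw [hxy]
      rcases le_total (g y) 0 with h | h
      · exact Set.mem_uIcc.2 (Or.inr ⟨h, by linarith⟩)
      · exact Set.mem_uIcc.2 (Or.inl ⟨by linarith, h⟩)
    obtain ⟨z, hz, hz0⟩ := intermediate_value_uIcc hcg' h0
    have hz2 := hgsq z (hsub hz)
    rw [hz0] at hz2
    have hx2 := hgsq x hx
    have hy2 := hgsq y hy
    have hgx0 : g x = 0 := by nlinarith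
    have hgy0 : g y = 0 := by nlinarith
    exact hne' (by rw [hgx0, hgy0])
  -- extract constant
  obtain ⟨a, ha, b, hb, hab⟩ := hne
  set c : ℝ := g a + μ with hc'
  have hKc : ∀ x ∈ I, K x = c * x ^ 2 := by
    intro x hx
    have hx0 := hpos x hx
    have h := hconst x hx a ha
    have hx2 : (x:ℝ) ^ 2 ≠ 0 := by positivity
    have hdiv : K x / x ^ 2 = c := by
      rw [hc']; simp only [hg] at h ⊢; linarith
    rw [div_eq_iff hx2] at hdiv
    exact hdiv
  -- interior point
  obtain ⟨a', b', ha', hb', hab'⟩ : ∃ a' b', a' ∈ I ∧ b' ∈ I ∧ a' < b' := by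
    rcases lt_or_gt_of_ne hab with h | h
    · exact ⟨a, b, ha, hb, h⟩
    · exact ⟨b, a, hb, ha, h⟩
  set m : ℝ := (a' + b') / 2 with hm
  have hmI : m ∈ I := hI.out ha' hb' ⟨by simp only [hm]; linarith, by simp only [hm]; linarith⟩
  have hm0 : (0:ℝ) < m := hpos m hmI
  have hmm : Set.Ioo a' b' ∈ nhds m :=
    Ioo_mem_nhds (by simp only [hm]; linarith) (by simp only [hm]; linarith)
  have hEq : K =ᶠ[nhds m] fun x => c * x ^ 2 :=
    Filter.eventuallyEq_of_mem hmm
      (fun y hy => hKc y (hI.out ha' hb' (Set.Ioo_subset_Icc_self hy)))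
  have hdm : deriv K m = c * (2 * m) := by
    rw [hEq.deriv_eq]
    simp [((hasDerivAt_pow 2 m).const_mul c).deriv]
  have hHm := hH m hmI
  rw [hdm, hKc m hmI] at hHm
  have hmne : m ≠ 0 := ne_of_gt hm0
  have hcm : c * m ^ 2 / m = c * m := by field_simp
  rw [hcm] at hHm
  have hc3 : c = 2 * μ / 3 := by
    have h3 : (3 * c) * m = (2 * μ) * m := by ring_nf; ring_nf at hHm; linarith
    have := mul_right_cancel₀ hmne h3
    linarith
  have hga : g a = c - μ := by rw [hc']; ring
  have hlam' := hgsq a ha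
  rw [hga, hc3] at hlam'
  constructor
  · nlinarith [hlam']
  · intro x hx
    rw [hKc x hx, hc3]
end

section
/- Let I ⊆ (0,∞) be a nontrivial interval, μ > 0 and λ ≠ 0. If 𝒦 : I → ℝ is a differentiable function satisfying 𝒦'(x) + 𝒦(x)/x = 2μ/√x and 𝒦(x)·𝒦'(x)/x = λ/x for all x ∈ I, then λ = 8μ²/9 and 𝒦(x) = (4μ/3)·√x for all x ∈ I. Hence the onducycloids (with generating cycloid of radius R satisfying 1/(2R) = 16μ²/9, equivalently λ = 1/(4R)) are the only rotational surfaces with mean curvature H(x) = μ/√x and Gauss curvature K_G(x) = λ/x, x being the distance from the surface to the axis of revolution. -/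
/-- The onducycloids are the only rotational surfaces with mean curvature
H(x) = μ/√x and Gauss curvature K_G(x) = λ/x: necessarily λ = 8μ²/9 and
𝒦(x) = (4μ/3)·√x. -/
theorem stmt_17 (I : Set ℝ) (hI : I.OrdConnected) (hI0 : I ⊆ Set.Ioi 0)
    (hne : I.Nontrivial) (μ lam : ℝ) (hμ : 0 < μ) (hlam : lam ≠ 0)
    (K : ℝ → ℝ) (hK : ∀ x ∈ I, DifferentiableAt ℝ K x)
    (hH : ∀ x ∈ I, deriv K x + K x / x = 2 * μ / Real.sqrt x)
    (hKG : ∀ x ∈ I, K x * deriv K x / x = lam / x) :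
    lam = 8 * μ ^ 2 / 9 ∧ ∀ x ∈ I, K x = (4 * μ / 3) * Real.sqrt x := by
  have hx0 : ∀ x ∈ I, (0:ℝ) < x := fun x hx => hI0 hx
  -- K x * deriv K x = lam on I
  have hKK' : ∀ x ∈ I, K x * deriv K x = lam := by
    intro x hx
    have h := hKG x hx
    have hxne : x ≠ 0 := (hx0 x hx).ne'
    field_simp at h
    exact h
  -- key algebraic relation: 2 μ √x K x = K x ^ 2 + lam x
  have key : ∀ x ∈ I, 2 * μ * Real.sqrt x * K x = K x ^ 2 + lam * x := by
    intro x hx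
    have hxpos := hx0 x hx
    have hs : Real.sqrt x * Real.sqrt x = x := Real.mul_self_sqrt hxpos.le
    have hspos : 0 < Real.sqrt x := Real.sqrt_pos.mpr hxpos
    have h1 := hH x hx
    have h2 := hKK' x hx
    have hd : deriv K x = 2 * μ / Real.sqrt x - K x / x := by linarith
    rw [hd] at h2
    field_simp at h2
    have hE : (2 * μ * Real.sqrt x * K x - (K x ^ 2 + lam * x)) * Real.sqrt x
        = 0 := by linear_combination h2 + 2 * μ * K x * hs
    rcases mul_eq_zero.mp hE with h | h
    · linarith
    · exact absurd h hspos.ne'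
  -- K^2 - 2 lam x is constant on I
  obtain ⟨a, ha, b, hb, hab⟩ := hne
  have hconv : Convex ℝ I := hI.convex
  have hderiv : ∀ x ∈ I, HasDerivWithinAt (fun y => K y ^ 2 - 2 * lam * y)
      ((fun _ => (0:ℝ)) x) I x := by
    intro x hx
    have h1 : HasDerivAt (fun y => K y ^ 2 - 2 * lam * y)
        (2 * K x * deriv K x - 2 * lam) x := by
      have hKx : HasDerivAt K (deriv K x) x := (hK x hx).hasDerivAt
      have := ((hKx.pow 2).sub ((hasDerivAt_id x).const_mul (2 * lam)))
      have this' : HasDerivAt (fun y => K y ^ 2 - 2 * lam * y) _ x := this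
      simpa [mul_comm, mul_assoc, mul_left_comm] using this'
    have h2 : 2 * K x * deriv K x - 2 * lam = 0 := by
      have := hKK' x hx; nlinarith
    rw [h2] at h1
    exact h1.hasDerivWithinAt
  have hconst : ∀ x ∈ I, K x ^ 2 - 2 * lam * x = K a ^ 2 - 2 * lam * a := by
    intro x hx
    have := hconv.norm_image_sub_le_of_norm_hasDerivWithin_le (C := 0) hderiv
      (fun x _ => by simp) ha hx
    simp only [zero_mul, norm_le_zero_iff, sub_eq_zero] at this
    exact this
  set C := K a ^ 2 - 2 * lam * a with hC
  -- squared relation: polynomial identity on I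
  have poly : ∀ x ∈ I,
      4 * μ ^ 2 * x * (2 * lam * x + C) = (3 * lam * x + C) ^ 2 := by
    intro x hx
    have hxpos := hx0 x hx
    have hs : Real.sqrt x * Real.sqrt x = x := Real.mul_self_sqrt hxpos.le
    have hk := key x hx
    have hc := hconst x hx
    have hK2 : K x ^ 2 = 2 * lam * x + C := by rw [hC]; linarith
    have h3 : 2 * μ * Real.sqrt x * K x = 3 * lam * x + C := by
      rw [hk, hK2]; ring
    linear_combination (2 * μ * Real.sqrt x * K x + 3 * lam * x + C) * h3
      - 4 * μ ^ 2 * (K x) ^ 2 * hs - 4 * μ ^ 2 * x * hK2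
  -- evaluate at three points a, b, m = (a+b)/2
  have hm : (a + b) / 2 ∈ I := by
    rcases le_total a b with h | h
    · exact hI.out ha hb ⟨by linarith, by linarith⟩
    · exact hI.out hb ha ⟨by linarith, by linarith⟩
  have pa := poly a ha
  have pb := poly b hb
  have pm := poly _ hm
  have hba : b - a ≠ 0 := sub_ne_zero.mpr (Ne.symm hab)
  -- deduce the leading coefficient vanishes
  have hA : lam * (9 * lam - 8 * μ ^ 2) = 0 := by
    have h1 : (9 * lam ^ 2 - 8 * lam * μ ^ 2) * (a + b)
        + (6 * lam * C - 4 * μ ^ 2 * C) = 0 := by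
      have h2 : ((9 * lam ^ 2 - 8 * lam * μ ^ 2) * (a + b)
          + (6 * lam * C - 4 * μ ^ 2 * C)) * (b - a) = 0 := by
        linear_combination pa - pb
      exact (mul_eq_zero.mp h2).resolve_right hba
    have h2 : (9 * lam ^ 2 - 8 * lam * μ ^ 2) * (a + (a + b) / 2)
        + (6 * lam * C - 4 * μ ^ 2 * C) = 0 := by
      have hma : (a + b) / 2 - a ≠ 0 := by
        intro h; apply hab; linarith [sub_eq_zero.mp h]
      have h3 : ((9 * lam ^ 2 - 8 * lam * μ ^ 2) * (a + (a + b) / 2)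
          + (6 * lam * C - 4 * μ ^ 2 * C)) * ((a + b) / 2 - a) = 0 := by
        linear_combination pa - pm
      exact (mul_eq_zero.mp h3).resolve_right hma
    have h3 : (9 * lam ^ 2 - 8 * lam * μ ^ 2) * ((b - a) / 2) = 0 := by
      linear_combination h1 - h2
    have h4 := (mul_eq_zero.mp h3).resolve_right (by
      intro h; apply hba; linarith)
    linarith [h4]
  have hlamval : lam = 8 * μ ^ 2 / 9 := by
    rcases mul_eq_zero.mp hA with h | h
    · exact absurd h hlam
    · linarith
  -- now C = 0
  rw [hlamval] at pa pb
  have hCzero : C = 0 := by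
    have ea : C ^ 2 = -(4/3) * μ ^ 2 * C * a := by linear_combination -pa
    have eb : C ^ 2 = -(4/3) * μ ^ 2 * C * b := by linear_combination -pb
    have h : (4/3) * μ ^ 2 * C * (b - a) = 0 := by linarith
    have hμ2 : μ ^ 2 ≠ 0 := pow_ne_zero 2 hμ.ne'
    rcases mul_eq_zero.mp h with h' | h'
    · rcases mul_eq_zero.mp h' with h'' | h''
      · rcases mul_eq_zero.mp h'' with h3 | h3
        · norm_num at h3
        · exact absurd h3 hμ2
      · exact h''
    · exact absurd h' hba
  refine ⟨hlamval, ?_⟩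
  intro x hx
  have hxpos := hx0 x hx
  have hs : Real.sqrt x * Real.sqrt x = x := Real.mul_self_sqrt hxpos.le
  have hspos : 0 < Real.sqrt x := Real.sqrt_pos.mpr hxpos
  have hk := key x hx
  have hK2 : K x ^ 2 = 2 * lam * x + C := by
    have h := hconst x hx; linarith
  have h3 : 2 * μ * Real.sqrt x * K x = 3 * lam * x := by
    rw [hk, hK2, hCzero]; ring
  have h4 : 2 * μ * Real.sqrt x * K x
      = 2 * μ * Real.sqrt x * ((4 * μ / 3) * Real.sqrt x) := by
    rw [h3, hlamval]; linear_combination (-(8 * μ ^ 2 / 3)) * hs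
  have h5 : 2 * μ * Real.sqrt x ≠ 0 := by positivity
  exact mul_left_cancel₀ h5 h4
end

section
/- Let I ⊆ (0,∞) be a nontrivial interval, μ > 0 and λ ≠ 0. If 𝒦 : I → ℝ is a differentiable function satisfying 𝒦'(x) + 𝒦(x)/x = 2μ·x^{−3/2} and 𝒦(x)·𝒦'(x)/x = λ/x³ for all x ∈ I, then λ = −8μ² and 𝒦(x) = 4μ/√x for all x ∈ I. Hence the Flamm's paraboloids (with Schwarzschild radius r_S = 16μ², so that λ = −r_S/2) are the only rotational surfaces with mean curvature H(x) = μ/(x√x) and Gauss curvature K_G(x) = λ/x³, x being the distance from the surface to the axis of revolution. -/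
lemma stmt18_rpow {x : ℝ} (hx : 0 < x) :
    x ^ (-(3 : ℝ) / 2) = 1 / (x * Real.sqrt x) := by
  have h2 : x ^ (-(3:ℝ)/2) = (x ^ ((3:ℝ)/2))⁻¹ := by
    rw [neg_div, Real.rpow_neg hx.le]
  have h1 : x ^ ((3:ℝ)/2) = x * Real.sqrt x := by
    have h3 : (3:ℝ)/2 = 1 + 1/2 := by norm_num
    rw [h3, Real.rpow_add hx, Real.rpow_one, Real.sqrt_eq_rpow]
  rw [h2, h1, one_div]

/-- The Flamm's paraboloids are the only rotational surfaces with mean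
curvature H(x) = μ·x^{−3/2} and Gauss curvature K_G(x) = λ/x³: necessarily λ = −8μ²
and 𝒦(x) = 4μ/√x. -/
theorem stmt_18 (I : Set ℝ) (hI : I.OrdConnected) (hI0 : I ⊆ Set.Ioi 0)
    (hne : I.Nontrivial) (μ lam : ℝ) (hμ : 0 < μ) (hlam : lam ≠ 0)
    (K : ℝ → ℝ) (hK : ∀ x ∈ I, DifferentiableAt ℝ K x)
    (hH : ∀ x ∈ I, deriv K x + K x / x = 2 * μ * x ^ (-(3 : ℝ) / 2))
    (hKG : ∀ x ∈ I, K x * deriv K x / x = lam / x ^ 3) :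
    lam = -8 * μ ^ 2 ∧ ∀ x ∈ I, K x = 4 * μ / Real.sqrt x := by
  -- three points a < c < b in I
  obtain ⟨a₀, ha₀, b₀, hb₀, hab₀⟩ := hne
  set a := min a₀ b₀ with ha_def
  set b := max a₀ b₀ with hb_def
  have ha : a ∈ I := by rcases min_choice a₀ b₀ with h | h <;> rw [ha_def, h] <;> assumption
  have hb : b ∈ I := by rcases max_choice a₀ b₀ with h | h <;> rw [hb_def, h] <;> assumption
  have hab : a < b := min_lt_max.mpr hab₀
  set c := (a + b) / 2 with hc_def
  have hc : c ∈ I := hI.out ha hb ⟨by linarith, by linarith⟩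
  have hac : a < c := by rw [hc_def]; linarith
  have hcb : c < b := by rw [hc_def]; linarith
  have hconv : Convex ℝ I := (convex_iff_ordConnected).mpr hI
  -- rewrite the derivative
  have hderiv : ∀ x ∈ I, deriv K x = 2 * μ / (x * Real.sqrt x) - K x / x := by
    intro x hx
    have hx0 : 0 < x := hI0 hx
    have h := hH x hx
    rw [stmt18_rpow hx0] at h
    have h' : 2 * μ * (1 / (x * Real.sqrt x)) = 2 * μ / (x * Real.sqrt x) := by ring
    rw [h'] at h
    linarith
  -- F(t) = t K(t) - 4μ√t has derivative 0 on I
  have hF : ∀ x ∈ I, HasDerivAt (fun t => t * K t - 4 * μ * Real.sqrt t) 0 x := by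
    intro x hx
    have hx0 : 0 < x := hI0 hx
    have hs0 : 0 < Real.sqrt x := Real.sqrt_pos.mpr hx0
    have hsq : Real.sqrt x * Real.sqrt x = x := Real.mul_self_sqrt hx0.le
    have h1 : HasDerivAt (fun t => t * K t) (1 * K x + x * deriv K x) x :=
      (hasDerivAt_id x).mul ((hK x hx).hasDerivAt)
    have h2 : HasDerivAt (fun t => 4 * μ * Real.sqrt t) (4 * μ * (1 / (2 * Real.sqrt x))) x :=
      (Real.hasDerivAt_sqrt hx0.ne').const_mul _
    have h := h1.sub h2
    refine h.congr_deriv ?_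
    rw [hderiv x hx]
    field_simp
    ring
  set C := a * K a - 4 * μ * Real.sqrt a with hC_def
  -- integrate: x K(x) = 4μ√x + C on I
  have hconst : ∀ x ∈ I, x * K x = 4 * μ * Real.sqrt x + C := by
    intro x hx
    have hle := Convex.norm_image_sub_le_of_norm_hasDerivWithin_le
      (f := fun t => t * K t - 4 * μ * Real.sqrt t) (f' := fun _ => (0:ℝ)) (C := 0)
      (fun y hy => (hF y hy).hasDerivWithinAt) (fun y _ => by simp) hconv ha hx
    rw [zero_mul] at hle
    have h0 : (x * K x - 4 * μ * Real.sqrt x) - (a * K a - 4 * μ * Real.sqrt a) = 0 := by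
      have := norm_le_zero_iff.mp hle
      simpa using this
    rw [hC_def]; linarith
  -- the quadratic identity at each point
  have hP : ∀ x ∈ I,
      (lam + 8 * μ ^ 2) * Real.sqrt x ^ 2 + 6 * μ * C * Real.sqrt x + C ^ 2 = 0 := by
    intro x hx
    have hx0 : 0 < x := hI0 hx
    set s := Real.sqrt x with hs_def
    have hs0 : 0 < s := Real.sqrt_pos.mpr hx0
    have hsq : s ^ 2 = x := Real.sq_sqrt hx0.le
    have hx' : x ≠ 0 := hx0.ne'
    have hs' : s ≠ 0 := hs0.ne'
    have hKx : K x * s ^ 2 = 4 * μ * s + C := by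
      rw [hsq]; linarith [hconst x hx]
    have hg := hKG x hx
    rw [hderiv x hx] at hg
    field_simp at hg
    have hg3 : (2 * μ * K x * s - (K x) ^ 2 * s ^ 2 - lam) * (s * x ^ 3) = 0 := by
      rw [← hs_def] at hg
      linear_combination s ^ 2 * x ^ 2 * hg + s * x ^ 2 * lam * hsq
    have hg2 : 2 * μ * K x * s - (K x) ^ 2 * s ^ 2 - lam = 0 :=
      (mul_eq_zero.mp hg3).resolve_right (by positivity)
    linear_combination (-(s^2)) * hg2 - (K x * s ^ 2 + 2 * μ * s + C) * hKx
  -- evaluate at three points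
  have hsa2 : Real.sqrt a ^ 2 = a := Real.sq_sqrt (hI0 ha).le
  have hsc2 : Real.sqrt c ^ 2 = c := Real.sq_sqrt (hI0 hc).le
  have hsb2 : Real.sqrt b ^ 2 = b := Real.sq_sqrt (hI0 hb).le
  have hsac : Real.sqrt a < Real.sqrt c := Real.sqrt_lt_sqrt (hI0 ha).le hac
  have hscb : Real.sqrt c < Real.sqrt b := Real.sqrt_lt_sqrt (hI0 hc).le hcb
  have e1 := hP a ha
  have e2 := hP c hc
  have e3 := hP b hb
  set A := lam + 8 * μ ^ 2 with hA_def
  have h12 : A * (Real.sqrt a + Real.sqrt c) + 6 * μ * C = 0 := by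
    have hne0 : Real.sqrt a - Real.sqrt c ≠ 0 := sub_ne_zero.mpr (ne_of_lt hsac)
    have hm : (Real.sqrt a - Real.sqrt c) * (A * (Real.sqrt a + Real.sqrt c) + 6 * μ * C) = 0 := by
      linear_combination e1 - e2
    exact (mul_eq_zero.mp hm).resolve_left hne0
  have h13 : A * (Real.sqrt a + Real.sqrt b) + 6 * μ * C = 0 := by
    have hne0 : Real.sqrt a - Real.sqrt b ≠ 0 :=
      sub_ne_zero.mpr (ne_of_lt (lt_trans hsac hscb))
    have hm : (Real.sqrt a - Real.sqrt b) * (A * (Real.sqrt a + Real.sqrt b) + 6 * μ * C) = 0 := by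
      linear_combination e1 - e3
    exact (mul_eq_zero.mp hm).resolve_left hne0
  have hA0 : A = 0 := by
    have hm : A * (Real.sqrt c - Real.sqrt b) = 0 := by linear_combination h12 - h13
    exact (mul_eq_zero.mp hm).resolve_right (sub_ne_zero.mpr (ne_of_lt hscb))
  have hC0 : C = 0 := by
    have : 6 * μ * C = 0 := by linear_combination h12 - (Real.sqrt a + Real.sqrt c) * hA0
    have h6 : (6 : ℝ) * μ ≠ 0 := by positivity
    exact (mul_eq_zero.mp this).resolve_left h6
  constructor
  · rw [hA_def] at hA0; linarith
  · intro x hx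
    have hx0 : 0 < x := hI0 hx
    have hs0 : 0 < Real.sqrt x := Real.sqrt_pos.mpr hx0
    have hsq : Real.sqrt x * Real.sqrt x = x := Real.mul_self_sqrt hx0.le
    have h := hconst x hx
    rw [hC0, add_zero] at h
    field_simp
    nlinarith [h, hsq]
end

section
/- Let I ⊆ (0,∞) be a nontrivial interval, λ > 0, μ ≠ 0, γ > 0 and ν ≠ 0. If 𝒦 : I → ℝ is a differentiable function satisfying 𝒦'(x) + 𝒦(x)/x = 2(λ + μ/x) and 𝒦(x)·𝒦'(x)/x = γ + ν/x for all x ∈ I, then γ = λ², ν = 2λμ, and 𝒦(x) = λ·x + 2μ for all x ∈ I. Hence the tori of revolution (with minor radius R = 1/λ and major radius a = −2μ/λ) are the only rotational surfaces with mean curvature H(x) = λ + μ/x and Gauss curvature K_G(x) = γ + ν/x, x being the distance from the surface to the axis of revolution. -/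
open Polynomial

/-- The tori of revolution are the only rotational surfaces with mean
curvature H(x) = λ + μ/x and Gauss curvature K_G(x) = γ + ν/x: necessarily γ = λ²,
ν = 2λμ and 𝒦(x) = λ·x + 2μ. -/
theorem stmt_19 (I : Set ℝ) (hI : I.OrdConnected) (hI0 : I ⊆ Set.Ioi 0)
    (hne : I.Nontrivial) (lam μ γ ν : ℝ) (hlam : 0 < lam) (hμ : μ ≠ 0)
    (hγ : 0 < γ) (hν : ν ≠ 0)
    (K : ℝ → ℝ) (hK : ∀ x ∈ I, DifferentiableAt ℝ K x)
    (hH : ∀ x ∈ I, deriv K x + K x / x = 2 * (lam + μ / x))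
    (hKG : ∀ x ∈ I, K x * deriv K x / x = γ + ν / x) :
    γ = lam ^ 2 ∧ ν = 2 * lam * μ ∧ ∀ x ∈ I, K x = lam * x + 2 * μ := by
  obtain ⟨x₀, hx₀, y₀, hy₀, hxy⟩ := hne
  have hconv : Convex ℝ I := hI.convex
  set g : ℝ → ℝ := fun x => x * K x - (lam * x ^ 2 + 2 * μ * x) with hg
  -- g has derivative 0 on I
  have hg0 : ∀ x ∈ I, HasFDerivWithinAt g (0 : ℝ →L[ℝ] ℝ) I x := by
    intro x hx
    have hx0 : (0 : ℝ) < x := hI0 hx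
    have h1 := hH x hx
    have hd1 : HasDerivAt (fun y => y * K y) (1 * K x + x * deriv K x) x :=
      (hasDerivAt_id x).mul (hK x hx).hasDerivAt
    have hd2 : HasDerivAt (fun y => lam * y ^ 2 + 2 * μ * y)
        (lam * (2 * x ^ 1) + 2 * μ * 1) x := by
      exact ((hasDerivAt_pow 2 x).const_mul lam).add ((hasDerivAt_id x).const_mul (2 * μ))
    have hd : HasDerivAt g (1 * K x + x * deriv K x - (lam * (2 * x ^ 1) + 2 * μ * 1)) x :=
      hd1.sub hd2
    have hzero : 1 * K x + x * deriv K x - (lam * (2 * x ^ 1) + 2 * μ * 1) = 0 := by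
      field_simp at h1
      nlinarith [h1]
    rw [hzero] at hd
    have h0 : (ContinuousLinearMap.toSpanSingleton ℝ (0 : ℝ)) = 0 := by
      ext; simp
    have := hd.hasFDerivAt.hasFDerivWithinAt (s := I)
    rwa [h0] at this
  have hconst : ∀ x ∈ I, g x = g x₀ := by
    intro x hx
    have hb := hconv.norm_image_sub_le_of_norm_hasFDerivWithin_le
      (f' := fun _ => (0 : ℝ →L[ℝ] ℝ)) (C := 0) (fun y hy => hg0 y hy)
      (fun y _ => by simp) hx₀ hx
    have : ‖g x - g x₀‖ ≤ 0 := by simpa using hb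
    have := norm_le_zero_iff.mp this
    linarith [sub_eq_zero.mp this]
  obtain ⟨c, hKform⟩ : ∃ c, ∀ x ∈ I, x * K x = lam * x ^ 2 + 2 * μ * x + c := by
    refine ⟨x₀ * K x₀ - (lam * x₀ ^ 2 + 2 * μ * x₀), fun x hx => ?_⟩
    have := hconst x hx
    simp only [hg] at this
    linarith
  -- polynomial identity on I
  set p : Polynomial ℝ := C (lam ^ 2 - γ) * X ^ 4 + C (2 * lam * μ - ν) * X ^ 3 +
      C (-(2 * μ * c)) * X + C (-(c ^ 2)) with hp
  have heval : ∀ x ∈ I, p.eval x = 0 := by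
    intro x hx
    have hx0 : (0 : ℝ) < x := hI0 hx
    have hxne : x ≠ 0 := ne_of_gt hx0
    have h1 := hH x hx
    have h2 := hKG x hx
    have h3 := hKform x hx
    have he : deriv K x * x = 2 * lam * x + 2 * μ - K x := by
      field_simp at h1
      linarith
    have h4 : K x * (2 * lam * x + 2 * μ - K x) = γ * x ^ 2 + ν * x := by
      have h2' : K x * deriv K x = γ * x + ν := by
        field_simp at h2
        linarith
      calc K x * (2 * lam * x + 2 * μ - K x) = K x * (deriv K x * x) := by rw [he]
        _ = (K x * deriv K x) * x := by ring
        _ = (γ * x + ν) * x := by rw [h2']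
        _ = γ * x ^ 2 + ν * x := by ring
    simp only [hp, eval_add, eval_mul, eval_pow, eval_C, eval_X]
    linear_combination x ^ 2 * h4 + (x * K x - lam * x ^ 2 + c) * h3
  have hIinf : I.Infinite := by
    rcases lt_or_gt_of_ne hxy with h | h
    · exact (Set.Icc_infinite h).mono (hI.out hx₀ hy₀)
    · exact (Set.Icc_infinite h).mono (hI.out hy₀ hx₀)
  have hp0 : p = 0 := by
    apply Polynomial.eq_zero_of_infinite_isRoot
    apply Set.Infinite.mono _ hIinf
    intro x hx
    exact heval x hx
  have hcoeff : ∀ n, p.coeff n = 0 := by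
    intro n; rw [hp0]; simp
  have h4c := hcoeff 4
  have h3c := hcoeff 3
  have h0c := hcoeff 0
  simp only [hp, coeff_add, coeff_C_mul, coeff_X_pow, coeff_C, coeff_X] at h4c h3c h0c
  norm_num at h4c h3c h0c
  have hγeq : γ = lam ^ 2 := by linarith
  have hνeq : ν = 2 * lam * μ := by linarith
  have hc0 : c = 0 := by nlinarith [sq_nonneg c]
  refine ⟨hγeq, hνeq, ?_⟩
  intro x hx
  have hx0 : (0 : ℝ) < x := hI0 hx
  have h3 := hKform x hx
  rw [hc0] at h3
  have : x * K x = x * (lam * x + 2 * μ) := by linarith [h3]; 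
  exact mul_left_cancel₀ (ne_of_gt hx0) this
end
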